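/- arXiv:2111.07182 — 6 statements merged into one kernel-verified Lean document; each statement's English description precedes it below -/
import Mathlib

section
/- Let f ∈ ℱ₂ with f not identically zero on [0,1], and let ε > 0. Then there exists a real polynomial p satisfying (i) sup_{x∈[0,1]} |p(x) − f(x)| < ε, (ii) 0 < p(x) < 1 for all x ∈ (0,1), (iii) p(0) = 0, and (iv) p(1) = 0. -/
open Polynomial Filter

theorem stmt_13 (f : ℝ → ℝ) (hf : ContinuousOn f (Set.Icc (0:ℝ) 1))
    (hf0 : f 0 = 0) (hf1 : f 1 = 0)
    (hf01 : ∀ x ∈ Set.Icc (0:ℝ) 1, f x ∈ Set.Icc (0:ℝ) 1)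
    (hne : ∃ x ∈ Set.Icc (0:ℝ) 1, f x ≠ 0)
    (ε : ℝ) (hε : 0 < ε) :
    ∃ p : Polynomial ℝ,
      sSup ((fun x => |p.eval x - f x|) '' Set.Icc (0:ℝ) 1) < ε ∧
      (∀ x ∈ Set.Ioo (0:ℝ) 1, p.eval x ∈ Set.Ioo (0:ℝ) 1) ∧
      p.eval 0 = 0 ∧ p.eval 1 = 0 := by
  classical
  obtain ⟨x₀, hx₀I, hx₀ne⟩ := hne
  have hx₀pos : 0 < f x₀ := lt_of_le_of_ne (hf01 x₀ hx₀I).1 (Ne.symm hx₀ne)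
  -- a ball around x₀ where f is positive
  have hev : {y | 0 < f y} ∈ nhdsWithin x₀ (Set.Icc (0:ℝ) 1) :=
    (hf x₀ hx₀I).eventually (eventually_gt_nhds hx₀pos)
  obtain ⟨δ, hδpos, hδ⟩ := Metric.mem_nhdsWithin_iff.mp hev
  -- the continuous map version of f
  let F : C(unitInterval, ℝ) := ⟨(Set.Icc (0:ℝ) 1).restrict f, hf.restrict⟩
  have := bernsteinApproximation_uniform F
  rw [Metric.tendsto_atTop] at this
  obtain ⟨N, hN⟩ := this (ε/2) (half_pos hε)
  set n : ℕ := max N (⌈1/δ⌉₊ + 1) with hn_def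
  have hnN : N ≤ n := le_max_left _ _
  have hn1 : 1 ≤ n := le_trans (Nat.le_add_left 1 _) (le_max_right _ _)
  have hnpos : (0:ℝ) < n := by exact_mod_cast Nat.lt_of_lt_of_le Nat.zero_lt_one hn1
  have hnδ : 1/(n:ℝ) < δ := by
    have h1 : (1/δ : ℝ) < n := by
      have h2 : (⌈1/δ⌉₊ + 1 : ℕ) ≤ n := le_max_right _ _
      have h3 : (1/δ : ℝ) ≤ ⌈1/δ⌉₊ := Nat.le_ceil _
      have h4 : ((⌈1/δ⌉₊ + 1 : ℕ) : ℝ) ≤ n := by exact_mod_cast h2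
      push_cast at h4
      linarith
    rw [div_lt_iff₀ hnpos]
    rw [div_lt_iff₀ hδpos] at h1
    linarith
  -- the index k₀ with k₀/n close to x₀
  set k₀ : ℕ := ⌊(n:ℝ) * x₀⌋₊ with hk₀_def
  have hx₀0 : (0:ℝ) ≤ x₀ := hx₀I.1
  have hx₀1 : x₀ ≤ 1 := hx₀I.2
  have hk₀le : (k₀:ℝ) ≤ (n:ℝ) * x₀ := Nat.floor_le (by positivity)
  have hk₀lt : (n:ℝ) * x₀ < k₀ + 1 := Nat.lt_floor_add_one _
  have hk₀n : k₀ ≤ n := by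
    have : (k₀:ℝ) ≤ n := le_trans hk₀le (by nlinarith)
    exact_mod_cast this
  have hk₀mem : ((k₀:ℝ)/n) ∈ Set.Icc (0:ℝ) 1 := by
    constructor
    · positivity
    · rw [div_le_one hnpos]; exact_mod_cast hk₀n
  have hk₀dist : dist ((k₀:ℝ)/n) x₀ < δ := by
    have hd : x₀ - (k₀:ℝ)/n < 1/n := by
      rw [sub_lt_iff_lt_add, ← add_div, lt_div_iff₀ hnpos]
      nlinarith
    have hd2 : (k₀:ℝ)/n ≤ x₀ := by rw [div_le_iff₀ hnpos]; nlinarith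
    rw [Real.dist_eq, abs_lt]
    constructor <;> linarith
  have hfk₀ : 0 < f ((k₀:ℝ)/n) := hδ ⟨Metric.mem_ball.mpr hk₀dist, hk₀mem⟩
  -- the polynomial
  set p : Polynomial ℝ :=
    ∑ k ∈ Finset.range (n+1), Polynomial.C (f ((k:ℝ)/n)) * bernsteinPolynomial ℝ n k with hp_def
  have hpeval : ∀ x : ℝ, p.eval x =
      ∑ k ∈ Finset.range (n+1), f ((k:ℝ)/n) * ((n.choose k : ℝ) * x^k * (1-x)^(n-k)) := by
    intro x
    simp [hp_def, Polynomial.eval_finset_sum, bernsteinPolynomial, mul_assoc]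
  -- relation with the Bernstein approximation
  have hBF : ∀ x : unitInterval, p.eval (x:ℝ) = bernsteinApproximation n F x := by
    intro x
    rw [bernsteinApproximation.apply, hpeval]
    rw [← Fin.sum_univ_eq_sum_range (fun k => f ((k:ℝ)/n) * ((n.choose k : ℝ) * (x:ℝ)^k * (1-(x:ℝ))^(n-k)))]
    apply Finset.sum_congr rfl
    intro k _
    rw [bernstein_apply]
    rw [smul_eq_mul, mul_comm]
    rfl
  refine ⟨p, ?_, ?_, ?_, ?_⟩
  · -- sup bound
    have hle : ∀ y ∈ (fun x => |p.eval x - f x|) '' Set.Icc (0:ℝ) 1, y ≤ ε/2 := by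
      rintro y ⟨x, hx, rfl⟩
      have h1 : p.eval x - f x = (bernsteinApproximation n F - F) (⟨x, hx⟩ : unitInterval) := by
        simp [hBF ⟨x, hx⟩]
        rfl
      have h2 : ‖(bernsteinApproximation n F - F) (⟨x, hx⟩ : unitInterval)‖ ≤
          ‖bernsteinApproximation n F - F‖ := ContinuousMap.norm_coe_le_norm _ _
      have h3 : ‖bernsteinApproximation n F - F‖ = dist (bernsteinApproximation n F) F := by
        rw [dist_eq_norm]
      have h4 := hN n hnN
      calc |p.eval x - f x| = ‖(bernsteinApproximation n F - F) (⟨x, hx⟩ : unitInterval)‖ := by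
            rw [h1]; rfl
        _ ≤ ‖bernsteinApproximation n F - F‖ := h2
        _ ≤ ε/2 := by rw [h3]; linarith
    calc sSup ((fun x => |p.eval x - f x|) '' Set.Icc (0:ℝ) 1) ≤ ε/2 :=
          Real.sSup_le hle (by linarith)
      _ < ε := by linarith
  · -- strict bounds on (0,1)
    rintro x ⟨hx0, hx1⟩
    have hx1' : (0:ℝ) < 1 - x := by linarith
    have hmem : ∀ k ∈ Finset.range (n+1), ((k:ℝ)/n) ∈ Set.Icc (0:ℝ) 1 := by
      intro k hk
      rw [Finset.mem_range, Nat.lt_succ_iff] at hk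
      constructor
      · positivity
      · rw [div_le_one hnpos]; exact_mod_cast hk
    have hbpos : ∀ k ∈ Finset.range (n+1), (0:ℝ) < (n.choose k : ℝ) * x^k * (1-x)^(n-k) := by
      intro k hk
      rw [Finset.mem_range, Nat.lt_succ_iff] at hk
      have : 0 < (n.choose k : ℝ) := by exact_mod_cast Nat.choose_pos hk
      positivity
    constructor
    · -- positivity
      rw [hpeval]
      apply Finset.sum_pos'
      · intro k hk
        exact mul_nonneg (hf01 _ (hmem k hk)).1 (le_of_lt (hbpos k hk))
      · refine ⟨k₀, Finset.mem_range.mpr (Nat.lt_succ_of_le hk₀n), ?_⟩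
        exact mul_pos hfk₀ (hbpos k₀ (Finset.mem_range.mpr (Nat.lt_succ_of_le hk₀n)))
    · -- upper bound
      have hsum1 : ∑ k ∈ Finset.range (n+1), ((n.choose k : ℝ) * x^k * (1-x)^(n-k)) = 1 := by
        have hs := bernsteinPolynomial.sum ℝ n
        have := congrArg (Polynomial.eval x) hs
        simpa [Polynomial.eval_finset_sum, bernsteinPolynomial, mul_assoc] using this
      rw [hpeval]
      refine lt_of_lt_of_eq ?_ hsum1
      apply Finset.sum_lt_sum
      · intro k hk
        exact mul_le_of_le_one_left (le_of_lt (hbpos k hk)) (hf01 _ (hmem k hk)).2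
      · refine ⟨0, Finset.mem_range.mpr (Nat.succ_pos n), ?_⟩
        have h0 : f (((0:ℕ):ℝ)/n) = 0 := by norm_num [hf0]
        rw [h0, zero_mul]
        exact hbpos 0 (Finset.mem_range.mpr (Nat.succ_pos n))
  · -- eval at 0
    rw [Polynomial.eval_finset_sum]
    simp only [Polynomial.eval_mul, Polynomial.eval_C, bernsteinPolynomial.eval_at_0]
    rw [Finset.sum_eq_single 0]
    · simp [hf0]
    · intro k _ hk; simp [hk]
    · intro h; exact absurd (Finset.mem_range.mpr (Nat.succ_pos n)) h
  · -- eval at 1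
    rw [Polynomial.eval_finset_sum]
    simp only [Polynomial.eval_mul, Polynomial.eval_C, bernsteinPolynomial.eval_at_1]
    rw [Finset.sum_eq_single n]
    · have : ((n:ℝ)/n) = 1 := div_self (ne_of_gt hnpos)
      simp [this, hf1]
    · intro k _ hk; simp [hk]
    · intro h; exact absurd (Finset.mem_range.mpr (Nat.lt_succ_self n)) h
end

section
/- Let ε > 0 and let p be a non-constant real polynomial satisfying p(0) = p(1) = 0 and 0 < p(x) < 1 for all x ∈ (0,1). Then there exists a real polynomial q satisfying (i) sup_{x∈[0,1]} |q(x) − p(x)| < ε, (ii) 0 < q(x) < 1 for all x ∈ (0,1), (iii) q(0) = 0, (iv) q(1) = 0, (v) q(x) < 0 for all x ∈ [−1, 0), and (vi) q(x) < 0 for all x ∈ (1, 2]. -/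
open Polynomial Topology Filter

lemma stmt_14_aux (δ η S M P w : ℝ) (hδ0 : 0 < δ) (hδ1 : δ < 1) (hη : 0 < η)
    (hS : 0 ≤ S) (hw : η ≤ w) (hP : |P| ≤ M) (hbig : M + 1 < δ * η * S) :
    (1 - δ) * P - δ * (w * (1 + S)) < 0 := by
  obtain ⟨hP1, hP2⟩ := abs_le.1 hP
  have hM0 : 0 ≤ M := le_trans (abs_nonneg _) hP
  have h1 : (1 - δ) * P ≤ M := by nlinarith
  have h2 : δ * η * (1 + S) ≤ δ * (w * (1 + S)) := by
    have h3 : 0 ≤ δ * (1 + S) * (w - η) :=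
      mul_nonneg (mul_nonneg hδ0.le (by linarith)) (by linarith)
    nlinarith
  nlinarith

lemma stmt_14_aux2 (δ a b s : ℝ) (hδ0 : 0 < δ) (ha0 : 0 ≤ a) (ha1 : a ≤ 1)
    (hb1 : -(1/4 : ℝ) ≤ b) (hb2 : b ≤ 0) (hs0 : 0 ≤ s) (hs1 : s ≤ 1) :
    |(1 - δ) * a - δ * (b * (1 + s)) - a| ≤ δ := by
  have h1 : δ * a ≤ δ := by nlinarith
  have h0 : 0 ≤ δ * a := mul_nonneg hδ0.le ha0
  have h2 : 0 ≤ δ * (-b) * (1 + s) := mul_nonneg (mul_nonneg hδ0.le (by linarith)) (by linarith)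
  have h3 : δ * (-b) * (1 + s) ≤ δ * ((1/4) * 2) := by
    have h4 : (-b) * (1 + s) ≤ (1/4) * 2 :=
      mul_le_mul (by linarith) (by linarith) (by linarith) (by norm_num)
    nlinarith
  rw [abs_le]
  constructor <;> nlinarith

lemma stmt_14_aux3 (δ a b s : ℝ) (hδ0 : 0 < δ) (hδ1 : δ < 1) (ha0 : 0 < a) (ha1 : a < 1)
    (hb1 : -(1/4 : ℝ) ≤ b) (hb2 : b ≤ 0) (hs0 : 0 ≤ s) (hs1 : s ≤ 1) :
    0 < (1 - δ) * a - δ * (b * (1 + s)) ∧ (1 - δ) * a - δ * (b * (1 + s)) < 1 := by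
  have h2 : 0 ≤ δ * (-b) * (1 + s) := mul_nonneg (mul_nonneg hδ0.le (by linarith)) (by linarith)
  have h3 : δ * (-b) * (1 + s) ≤ δ * ((1/4) * 2) := by
    have h4 : (-b) * (1 + s) ≤ (1/4) * 2 :=
      mul_le_mul (by linarith) (by linarith) (by linarith) (by norm_num)
    nlinarith
  constructor <;> nlinarith

set_option maxHeartbeats 2000000 in
theorem stmt_14 (ε : ℝ) (hε : 0 < ε) (p : Polynomial ℝ)
    (hpc : 0 < p.natDegree)
    (hp0 : p.eval 0 = 0) (hp1 : p.eval 1 = 0)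
    (hp01 : ∀ x ∈ Set.Ioo (0:ℝ) 1, p.eval x ∈ Set.Ioo (0:ℝ) 1) :
    ∃ q : Polynomial ℝ,
      sSup ((fun x => |q.eval x - p.eval x|) '' Set.Icc (0:ℝ) 1) < ε ∧
      (∀ x ∈ Set.Ioo (0:ℝ) 1, q.eval x ∈ Set.Ioo (0:ℝ) 1) ∧
      q.eval 0 = 0 ∧ q.eval 1 = 0 ∧
      (∀ x ∈ Set.Ico (-1:ℝ) 0, q.eval x < 0) ∧
      (∀ x ∈ Set.Ioc (1:ℝ) 2, q.eval x < 0) := by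
  classical
  -- choose δ
  obtain ⟨δ, hδ0, hδ1, hδε⟩ : ∃ δ : ℝ, 0 < δ ∧ δ < 1 ∧ δ < ε :=
    ⟨min (ε/2) (1/2), lt_min (by linarith) (by norm_num),
      lt_of_le_of_lt (min_le_right _ _) (by norm_num),
      lt_of_le_of_lt (min_le_left _ _) (by linarith)⟩
  -- factorizations p = x * p₁ = (x-1) * p₂
  obtain ⟨p₁, hp₁⟩ : (X - C 0) ∣ p := (dvd_iff_isRoot).2 hp0
  obtain ⟨p₂, hp₂⟩ : (X - C 1) ∣ p := (dvd_iff_isRoot).2 hp1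
  have hep1 : ∀ x : ℝ, p.eval x = x * p₁.eval x := by
    intro x; rw [hp₁]; simp
  have hep2 : ∀ x : ℝ, p.eval x = (x - 1) * p₂.eval x := by
    intro x; rw [hp₂]; simp
  -- p₁ 0 ≥ 0
  have hne0 : (𝓝[Set.Ioo (0:ℝ) 1] (0:ℝ)).NeBot := by
    refine mem_closure_iff_nhdsWithin_neBot.1 ?_
    rw [closure_Ioo (by norm_num : (0:ℝ) ≠ 1)]
    exact ⟨le_refl _, by norm_num⟩
  have hne1 : (𝓝[Set.Ioo (0:ℝ) 1] (1:ℝ)).NeBot := by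
    refine mem_closure_iff_nhdsWithin_neBot.1 ?_
    rw [closure_Ioo (by norm_num : (0:ℝ) ≠ 1)]
    exact ⟨by norm_num, le_refl _⟩
  have hp₁0 : 0 ≤ p₁.eval 0 := by
    refine ge_of_tendsto (p₁.continuous.continuousWithinAt :
      Filter.Tendsto (fun x => p₁.eval x) (𝓝[Set.Ioo (0:ℝ) 1] 0) (𝓝 (p₁.eval 0))) ?_
    filter_upwards [self_mem_nhdsWithin] with x hx
    have hpx := (hp01 x hx).1
    rw [hep1 x] at hpx
    nlinarith [hx.1]
  have hp₂1 : p₂.eval 1 ≤ 0 := by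
    refine le_of_tendsto (p₂.continuous.continuousWithinAt :
      Filter.Tendsto (fun x => p₂.eval x) (𝓝[Set.Ioo (0:ℝ) 1] 1) (𝓝 (p₂.eval 1))) ?_
    filter_upwards [self_mem_nhdsWithin] with x hx
    have hpx := (hp01 x hx).1
    rw [hep2 x] at hpx
    nlinarith [hx.2]
  -- neighbourhoods where the bracket terms are controlled
  have hU : ∃ r > (0:ℝ), ∀ x : ℝ, |x| < r → -δ < (1 - δ) * p₁.eval x := by
    have hopen : IsOpen {x : ℝ | -δ < (1 - δ) * p₁.eval x} :=
      isOpen_lt continuous_const (continuous_const.mul p₁.continuous)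
    have h0 : (0:ℝ) ∈ {x : ℝ | -δ < (1 - δ) * p₁.eval x} := by
      simp only [Set.mem_setOf_eq]; nlinarith
    obtain ⟨r, hr0, hr⟩ := Metric.isOpen_iff.1 hopen 0 h0
    refine ⟨r, hr0, fun x hx => ?_⟩
    have : x ∈ Metric.ball (0:ℝ) r := by
      simpa [Real.dist_eq] using hx
    exact hr this
  have hV : ∃ r > (0:ℝ), ∀ x : ℝ, |x - 1| < r → (1 - δ) * p₂.eval x < δ := by
    have hopen : IsOpen {x : ℝ | (1 - δ) * p₂.eval x < δ} :=
      isOpen_lt (continuous_const.mul p₂.continuous) continuous_const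
    have h1 : (1:ℝ) ∈ {x : ℝ | (1 - δ) * p₂.eval x < δ} := by
      simp only [Set.mem_setOf_eq]; nlinarith
    obtain ⟨r, hr0, hr⟩ := Metric.isOpen_iff.1 hopen 1 h1
    refine ⟨r, hr0, fun x hx => ?_⟩
    have : x ∈ Metric.ball (1:ℝ) r := by
      simpa [Real.dist_eq] using hx
    exact hr this
  obtain ⟨r₀, hr₀, hU⟩ := hU
  obtain ⟨r₁, hr₁, hV⟩ := hV
  obtain ⟨η, hη0, hηr₀, hηr₁, hηhalf⟩ :
      ∃ η : ℝ, 0 < η ∧ η ≤ r₀ ∧ η ≤ r₁ ∧ η ≤ 1/2 :=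
    ⟨min (min r₀ r₁) (1/2), lt_min (lt_min hr₀ hr₁) (by norm_num),
      le_trans (min_le_left _ _) (min_le_left _ _),
      le_trans (min_le_left _ _) (min_le_right _ _), min_le_right _ _⟩
  -- bound for p on [-1,2]
  obtain ⟨M, hM⟩ := (isCompact_Icc : IsCompact (Set.Icc (-1:ℝ) 2)).exists_bound_of_continuousOn
    (p.continuous.continuousOn)
  have hM0 : 0 ≤ M := le_trans (norm_nonneg _) (hM 0 (by norm_num))
  have hMabs : ∀ x ∈ Set.Icc (-1:ℝ) 2, |p.eval x| ≤ M := by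
    intro x hx; simpa [Real.norm_eq_abs] using hM x hx
  -- choose m
  obtain ⟨m, hm⟩ := pow_unbounded_of_one_lt ((M + 1) / (δ * η))
    (by nlinarith : (1:ℝ) < 1 + 8 * η)
  -- the polynomial q
  obtain ⟨q, hq⟩ : ∃ q : Polynomial ℝ, ∀ x : ℝ, q.eval x =
      (1 - δ) * p.eval x - δ * ((x ^ 2 - x) * (1 + (8 * (x ^ 2 - x) + 1) ^ (2 * m))) :=
    ⟨C (1 - δ) * p - C δ * ((X ^ 2 - X) * (1 + (C 8 * (X ^ 2 - X) + 1) ^ (2 * m))),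
      by intro x; simp⟩
  refine ⟨q, ?_⟩
  -- basic facts about s = (8w+1)^(2m) on [0,1]
  have hs_nonneg : ∀ x : ℝ, 0 ≤ (8 * (x ^ 2 - x) + 1) ^ (2 * m) :=
    fun x => (even_two_mul m).pow_nonneg _
  have hs_le_one : ∀ x : ℝ, x ∈ Set.Icc (0:ℝ) 1 → (8 * (x ^ 2 - x) + 1) ^ (2 * m) ≤ 1 := by
    intro x hx
    have h1 : |8 * (x ^ 2 - x) + 1| ≤ 1 := by
      rw [abs_le]
      constructor
      · nlinarith [sq_nonneg (x - 1/2)]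
      · nlinarith [hx.1, hx.2]
    calc (8 * (x ^ 2 - x) + 1) ^ (2 * m) ≤ |(8 * (x ^ 2 - x) + 1) ^ (2 * m)| := le_abs_self _
      _ = |8 * (x ^ 2 - x) + 1| ^ (2 * m) := (abs_pow _ _)
      _ ≤ 1 := pow_le_one₀ (abs_nonneg _) h1
  -- p ∈ [0,1] on [0,1]
  have hp_Icc : ∀ x ∈ Set.Icc (0:ℝ) 1, 0 ≤ p.eval x ∧ p.eval x ≤ 1 := by
    intro x hx
    rcases eq_or_lt_of_le hx.1 with h0 | h0
    · rw [← h0, hp0]; norm_num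
    rcases eq_or_lt_of_le hx.2 with h1 | h1
    · rw [h1, hp1]; norm_num
    · exact ⟨(hp01 x ⟨h0, h1⟩).1.le, (hp01 x ⟨h0, h1⟩).2.le⟩
  -- the far-region negativity lemma : if w := x^2 - x ≥ η and |p x| ≤ M then q x < 0
  have hfar : ∀ x : ℝ, x ∈ Set.Icc (-1:ℝ) 2 → η ≤ x ^ 2 - x → q.eval x < 0 := by
    intro x hx hw
    have habs := hMabs x hx
    have hpM : p.eval x ≤ M := (abs_le.1 habs).2
    have hbase : (1:ℝ) + 8 * η ≤ 8 * (x ^ 2 - x) + 1 := by nlinarith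
    have hpow1 : (1 + 8 * η) ^ (2 * m) ≤ (8 * (x ^ 2 - x) + 1) ^ (2 * m) := by
      gcongr <;> nlinarith
    have hpow2 : (1 + 8 * η) ^ m ≤ (1 + 8 * η) ^ (2 * m) := by
      apply pow_le_pow_right₀ (by nlinarith)
      omega
    have hs_big : (M + 1) / (δ * η) < (8 * (x ^ 2 - x) + 1) ^ (2 * m) := by
      calc (M + 1) / (δ * η) < (1 + 8 * η) ^ m := hm
        _ ≤ (1 + 8 * η) ^ (2 * m) := hpow2
        _ ≤ _ := hpow1
    have hδη : 0 < δ * η := mul_pos hδ0 hη0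
    have hs_big' : M + 1 < δ * η * (8 * (x ^ 2 - x) + 1) ^ (2 * m) := by
      rw [div_lt_iff₀ hδη] at hs_big
      linarith [hs_big]
    rw [hq x]
    exact stmt_14_aux δ η _ M _ _ hδ0 hδ1 hη0 (hs_nonneg x) hw habs hs_big'
  refine ⟨?_, ?_, ?_, ?_, ?_, ?_⟩
  · -- sup bound
    apply lt_of_le_of_lt (b := δ)
    · apply Real.sSup_le _ hδ0.le
      rintro y ⟨x, hx, rfl⟩
      dsimp only
      rw [hq x]
      have hsx := hs_nonneg x
      have hsx1 := hs_le_one x hx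
      have hpx := hp_Icc x hx
      have hb1 : -(1/4 : ℝ) ≤ x ^ 2 - x := by nlinarith [sq_nonneg (x - 1/2)]
      have hb2 : x ^ 2 - x ≤ 0 := by nlinarith [hx.1, hx.2]
      exact stmt_14_aux2 δ _ _ _ hδ0 hpx.1 hpx.2 hb1 hb2 hsx hsx1
    · exact hδε
  · -- q ∈ (0,1) on (0,1)
    intro x hx
    rw [Set.mem_Ioo] at hx ⊢
    rw [hq x]
    have hpx := hp01 x (Set.mem_Ioo.2 hx)
    rw [Set.mem_Ioo] at hpx
    have hsx := hs_nonneg x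
    have hsx1 := hs_le_one x ⟨hx.1.le, hx.2.le⟩
    have hb1 : -(1/4 : ℝ) ≤ x ^ 2 - x := by nlinarith [sq_nonneg (x - 1/2)]
    have hb2 : x ^ 2 - x < 0 := by nlinarith [hx.1, hx.2]
    exact stmt_14_aux3 δ _ _ _ hδ0 hδ1 hpx.1 hpx.2 hb1 hb2.le hsx hsx1
  · rw [hq 0, hp0]; ring
  · rw [hq 1, hp1]; ring
  · -- negative on [-1, 0)
    intro x hx
    rw [Set.mem_Ico] at hx
    rcases le_or_gt x (-η) with hfarx | hnear
    · exact hfar x ⟨hx.1, by linarith⟩ (by nlinarith [hx.2])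
    · -- near 0 : use bracket
      have hxabs : |x| < r₀ := by
        rw [abs_lt]; constructor <;> [linarith; linarith]
      have hbr := hU x hxabs
      have hqx : q.eval x = x * ((1 - δ) * p₁.eval x
          - δ * ((x - 1) * (1 + (8 * (x ^ 2 - x) + 1) ^ (2 * m)))) := by
        rw [hq x, hep1 x]; ring
      rw [hqx]
      apply mul_neg_of_neg_of_pos hx.2
      have hsx := hs_nonneg x
      have h : (1:ℝ) * 1 ≤ (1 - x) * (1 + (8 * (x ^ 2 - x) + 1) ^ (2 * m)) :=
        mul_le_mul (by linarith) (by linarith) (by norm_num) (by linarith)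
      nlinarith [mul_le_mul_of_nonneg_left h hδ0.le]
  · -- negative on (1, 2]
    intro x hx
    rw [Set.mem_Ioc] at hx
    rcases le_or_gt (1 + η) x with hfarx | hnear
    · exact hfar x ⟨by linarith, hx.2⟩ (by nlinarith)
    · have hxabs : |x - 1| < r₁ := by
        rw [abs_lt]; constructor <;> [linarith; linarith]
      have hbr := hV x hxabs
      have hqx : q.eval x = (x - 1) * ((1 - δ) * p₂.eval x
          - δ * (x * (1 + (8 * (x ^ 2 - x) + 1) ^ (2 * m)))) := by
        rw [hq x, hep2 x]; ring
      rw [hqx]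
      apply mul_neg_of_pos_of_neg (by linarith)
      have hsx := hs_nonneg x
      have h : (1:ℝ) * 1 ≤ x * (1 + (8 * (x ^ 2 - x) + 1) ^ (2 * m)) :=
        mul_le_mul (by linarith) (by linarith) (by norm_num) (by linarith)
      nlinarith [mul_le_mul_of_nonneg_left h hδ0.le]
end

section
/- Let L be an odd positive integer and let B_LΘ be the degree-L Bernstein polynomial approximation to the step function Θ. Then: (i) B_LΘ is strictly monotonically increasing on [0,1]; (ii) (B_LΘ)(x) + (B_LΘ)(1−x) = 1 for all x ∈ ℝ; (iii) B_LΘ ∈ 𝒫 if and only if L ≡ 1 (mod 4). -/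
open Polynomial

/-- The step function Θ: 0 for x < 1/2, 1/2 at x = 1/2, 1 for x > 1/2. -/
noncomputable def theta (x : ℝ) : ℝ :=
  if x < 1/2 then 0 else if x = 1/2 then 1/2 else 1

/-- Degree-L Bernstein polynomial approximation to Θ, as a real polynomial. -/
noncomputable def bernTheta (L : ℕ) : Polynomial ℝ :=
  ∑ k ∈ Finset.range (L+1),
    Polynomial.C (theta ((k : ℝ) / (L : ℝ)) * (L.choose k : ℝ)) *
      X ^ k * (1 - X) ^ (L - k)

/-- 𝒫: real polynomials with p([0,1]) ⊆ [0,1], p ≤ 0 on (-∞,0], p ≥ 1 on [1,∞). -/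
def memP (p : Polynomial ℝ) : Prop :=
  (∀ x ∈ Set.Icc (0:ℝ) 1, p.eval x ∈ Set.Icc (0:ℝ) 1) ∧
  (∀ x : ℝ, x ≤ 0 → p.eval x ≤ 0) ∧
  (∀ x : ℝ, 1 ≤ x → 1 ≤ p.eval x)

lemma theta_lo (r k : ℕ) (h : k ≤ r) : theta ((k:ℝ)/((2*r+1:ℕ):ℝ)) = 0 := by
  have h1 : (k:ℝ)/((2*r+1:ℕ):ℝ) < 1/2 := by
    rw [div_lt_div_iff₀ (by positivity) (by norm_num)]
    have : (k:ℝ) ≤ r := by exact_mod_cast h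
    push_cast; linarith
  rw [theta, if_pos h1]

lemma theta_hi (r k : ℕ) (h : r+1 ≤ k) : theta ((k:ℝ)/((2*r+1:ℕ):ℝ)) = 1 := by
  have h1 : (1:ℝ)/2 < (k:ℝ)/((2*r+1:ℕ):ℝ) := by
    rw [div_lt_div_iff₀ (by norm_num) (by positivity)]
    have : (r:ℝ)+1 ≤ k := by exact_mod_cast h
    push_cast; linarith
  rw [theta, if_neg (by linarith), if_neg (by linarith)]

lemma bern_eq (r : ℕ) : bernTheta (2*r+1) =
    ∑ i ∈ Finset.range (r+1),
      C (((2*r+1).choose (r+1+i) : ℝ)) * X ^ (r+1+i) * (1 - X) ^ (r-i) := by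
  rw [bernTheta, show 2*r+1+1 = (r+1)+(r+1) by ring, Finset.sum_range_add]
  rw [Finset.sum_eq_zero, zero_add]
  · apply Finset.sum_congr rfl
    intro i hi
    rw [theta_hi r _ (by omega), one_mul, show 2*r+1 - (r+1+i) = r - i by omega]
  · intro k hk
    simp only [Finset.mem_range] at hk
    rw [theta_lo r k (by omega)]
    simp

lemma dterm (c : ℝ) (a b : ℕ) :
    derivative (C c * X^(a+1) * (1-X)^(b+1)) =
      ((a+1:ℕ) : Polynomial ℝ) * (C c * X^a * (1-X)^(b+1))
        - ((b+1:ℕ) : Polynomial ℝ) * (C c * X^(a+1) * (1-X)^b) := by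
  simp only [derivative_mul, derivative_C, derivative_pow, derivative_X, derivative_sub,
    derivative_one]
  simp only [Nat.cast_add, Nat.cast_one, C_add, C_1, Polynomial.C_eq_natCast, Nat.add_sub_cancel]
  ring

lemma dterm' (c : ℝ) (a : ℕ) :
    derivative (C c * X^(a+1) * (1-X)^0) =
      ((a+1:ℕ) : Polynomial ℝ) * (C c * X^a * (1-X)^0) := by
  simp only [pow_zero, mul_one, derivative_mul, derivative_C, derivative_pow, derivative_X]
  simp only [Nat.cast_add, Nat.cast_one, C_add, C_1, Polynomial.C_eq_natCast, Nat.add_sub_cancel]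
  ring

noncomputable def Gpoly (r : ℕ) (i : ℕ) : Polynomial ℝ :=
  C (((2*r+1) * (2*r).choose (r+i) : ℕ) : ℝ) * X ^ (r+i) * (1 - X) ^ (r-i)

lemma natmul_C (n : ℕ) (c : ℝ) (p q : Polynomial ℝ) :
    ((n:ℕ) : Polynomial ℝ) * (C c * p * q) = C ((n:ℝ) * c) * p * q := by
  rw [← Polynomial.C_eq_natCast,
    show (C (n:ℝ) * (C c * p * q)) = C (n:ℝ) * C c * p * q by ring, ← C_mul]

lemma bern_deriv (r : ℕ) : (bernTheta (2*r+1)).derivative =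
    C (((2*r+1) * (2*r).choose r : ℕ) : ℝ) * (X * (1 - X)) ^ r := by
  rw [bern_eq, derivative_sum]
  have key : ∀ i ∈ Finset.range (r+1),
      derivative (C (((2*r+1).choose (r+1+i) : ℝ)) * X ^ (r+1+i) * (1 - X) ^ (r-i))
        = Gpoly r i - Gpoly r (i+1) := by
    intro i hi
    simp only [Finset.mem_range, Nat.lt_succ_iff] at hi
    by_cases h : i = r
    · subst h
      rw [Nat.sub_self, show i+1+i = (i+i)+1 by ring, dterm']
      have hz : Gpoly i (i+1) = 0 := by
        rw [Gpoly, Nat.choose_eq_zero_of_lt (by omega)]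
        simp
      rw [hz, sub_zero, Gpoly, Nat.sub_self, natmul_C, ← Nat.cast_mul]
      have hn : (i+i+1) * (2*i+1).choose (i+i+1) = (2*i+1) * (2*i).choose (i+i) := by
        rw [show i+i+1 = 2*i+1 by ring, show i+i = 2*i by ring, Nat.choose_self,
          Nat.choose_self]
      rw [hn]
    · have hir : i < r := lt_of_le_of_ne hi h
      obtain ⟨j, hj⟩ : ∃ j, r - i = j + 1 := ⟨r - i - 1, by omega⟩
      rw [hj, show r+1+i = (r+i)+1 by ring, dterm, Gpoly, Gpoly]
      rw [show r - (i+1) = j by omega, show r + (i+1) = (r+i)+1 by ring, hj]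
      rw [natmul_C, natmul_C, ← Nat.cast_mul, ← Nat.cast_mul]
      have hA : (r+i+1) * (2*r+1).choose ((r+i)+1) = (2*r+1) * (2*r).choose (r+i) := by
        have h2 := Nat.add_one_mul_choose_eq (2*r) (r+i)
        rw [mul_comm]
        exact h2.symm
      have hB : (j+1) * (2*r+1).choose ((r+i)+1) = (2*r+1) * (2*r).choose ((r+i)+1) := by
        have h1 := Nat.choose_succ_right_eq (2*r+1) ((r+i)+1)
        have h2 := Nat.add_one_mul_choose_eq (2*r) ((r+i)+1)
        rw [show 2*r+1 - ((r+i)+1) = j + 1 by omega] at h1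
        rw [h2, h1, mul_comm]
      rw [hA, hB]
  rw [Finset.sum_congr rfl key, Finset.sum_range_sub' (Gpoly r) (r+1)]
  have hz : Gpoly r (r+1) = 0 := by
    rw [Gpoly, Nat.choose_eq_zero_of_lt (by omega)]
    simp
  rw [hz, sub_zero, Gpoly, Nat.add_zero, Nat.sub_zero, mul_pow]
  ring

lemma eval_zero' (r : ℕ) : (bernTheta (2*r+1)).eval 0 = 0 := by
  rw [bern_eq]
  simp only [eval_finset_sum, eval_mul, eval_pow, eval_X, eval_C, eval_sub, eval_one]
  apply Finset.sum_eq_zero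
  intro i _
  rw [zero_pow (by omega)]
  ring

lemma theta_pair (r j : ℕ) (hj : j ≤ 2*r+1) :
    theta ((j:ℝ)/((2*r+1:ℕ):ℝ)) + theta (((2*r+1-j:ℕ):ℝ)/((2*r+1:ℕ):ℝ)) = 1 := by
  rcases le_or_gt j r with h | h
  · rw [theta_lo r j h, theta_hi r (2*r+1-j) (by omega)]; ring
  · rw [theta_hi r j h, theta_lo r (2*r+1-j) (by omega)]; ring

lemma bern_symm (r : ℕ) (x : ℝ) :
    (bernTheta (2*r+1)).eval x + (bernTheta (2*r+1)).eval (1-x) = 1 := by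
  have key : (bernTheta (2*r+1)).eval (1-x) =
      ∑ j ∈ Finset.range (2*r+1+1),
        theta (((2*r+1-j:ℕ):ℝ)/((2*r+1:ℕ):ℝ)) * ((2*r+1).choose j : ℝ)
          * x ^ j * (1-x) ^ (2*r+1-j) := by
    rw [bernTheta]
    simp only [eval_finset_sum, eval_mul, eval_pow, eval_X, eval_C, eval_sub, eval_one]
    rw [← Finset.sum_range_reflect]
    apply Finset.sum_congr rfl
    intro j hj
    simp only [Finset.mem_range, Nat.lt_succ_iff] at hj
    rw [show 2*r+1+1-1-j = 2*r+1-j by omega]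
    rw [show 2*r+1-(2*r+1-j) = j by omega]
    rw [Nat.choose_symm hj, show (1:ℝ)-(1-x) = x by ring]
    ring
  rw [key, bernTheta]
  simp only [eval_finset_sum, eval_mul, eval_pow, eval_X, eval_C, eval_sub, eval_one]
  rw [← Finset.sum_add_distrib]
  have : ∀ j ∈ Finset.range (2*r+1+1),
      theta ((j:ℝ)/((2*r+1:ℕ):ℝ)) * ((2*r+1).choose j : ℝ) * x ^ j * (1-x) ^ (2*r+1-j)
        + theta (((2*r+1-j:ℕ):ℝ)/((2*r+1:ℕ):ℝ)) * ((2*r+1).choose j : ℝ)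
            * x ^ j * (1-x) ^ (2*r+1-j)
      = x ^ j * (1-x) ^ (2*r+1-j) * ((2*r+1).choose j : ℝ) := by
    intro j hj
    simp only [Finset.mem_range, Nat.lt_succ_iff] at hj
    have := theta_pair r j hj
    linear_combination (((2*r+1).choose j : ℝ) * x ^ j * (1-x) ^ (2*r+1-j)) * this
  rw [Finset.sum_congr rfl this, ← add_pow x (1-x) (2*r+1)]
  norm_num

lemma bern_deriv_eval (r : ℕ) (x : ℝ) :
    deriv (fun y => (bernTheta (2*r+1)).eval y) x
      = (((2*r+1) * (2*r).choose r : ℕ):ℝ) * (x*(1-x))^r := by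
  rw [Polynomial.deriv, bern_deriv]
  simp [eval_mul, eval_pow]

theorem stmt_15 (L : ℕ) (hL : Odd L) :
    StrictMonoOn (fun x => (bernTheta L).eval x) (Set.Icc (0:ℝ) 1) ∧
    (∀ x : ℝ, (bernTheta L).eval x + (bernTheta L).eval (1-x) = 1) ∧
    (memP (bernTheta L) ↔ L % 4 = 1) := by
  obtain ⟨r, rfl⟩ := hL
  have hc : (0:ℝ) < (((2*r+1) * (2*r).choose r : ℕ):ℝ) := by
    have : 0 < (2*r+1) * (2*r).choose r :=
      Nat.mul_pos (by omega) (Nat.choose_pos (by omega))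
    exact_mod_cast this
  have hcont : Continuous fun y => (bernTheta (2*r+1)).eval y :=
    (bernTheta (2*r+1)).continuous
  have hdiff : Differentiable ℝ fun y => (bernTheta (2*r+1)).eval y :=
    (bernTheta (2*r+1)).differentiable
  have heval0 : (bernTheta (2*r+1)).eval 0 = 0 := eval_zero' r
  have heval1 : (bernTheta (2*r+1)).eval 1 = 1 := by
    have := bern_symm r 0
    rw [heval0] at this
    norm_num at this
    simpa using this
  have hmonoI : StrictMonoOn (fun x => (bernTheta (2*r+1)).eval x) (Set.Icc (0:ℝ) 1) := by
    apply strictMonoOn_of_deriv_pos (convex_Icc 0 1) hcont.continuousOn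
    intro x hx
    rw [interior_Icc] at hx
    rw [bern_deriv_eval]
    exact mul_pos hc (pow_pos (mul_pos hx.1 (by linarith [hx.2])) r)
  refine ⟨hmonoI, bern_symm r, ?_, ?_⟩
  · intro hm
    by_contra hne
    have hrodd : Odd r := Nat.odd_iff.mpr (by omega)
    have hanti : StrictAntiOn (fun x => (bernTheta (2*r+1)).eval x) (Set.Icc (-1:ℝ) 0) := by
      apply strictAntiOn_of_deriv_neg (convex_Icc (-1) 0) hcont.continuousOn
      intro x hx
      rw [interior_Icc] at hx
      rw [bern_deriv_eval]
      have hneg : x*(1-x) < 0 := mul_neg_of_neg_of_pos hx.2 (by linarith [hx.2])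
      exact mul_neg_of_pos_of_neg hc (hrodd.pow_neg hneg)
    have h1 : (bernTheta (2*r+1)).eval 0 < (bernTheta (2*r+1)).eval (-1) :=
      hanti (by norm_num) (by norm_num) (by norm_num)
    have h2 := hm.2.1 (-1) (by norm_num)
    rw [heval0] at h1
    linarith
  · intro h4
    have hrev : Even r := Nat.even_iff.mpr (by omega)
    have hmono : Monotone fun x => (bernTheta (2*r+1)).eval x := by
      apply monotone_of_deriv_nonneg hdiff
      intro x
      rw [bern_deriv_eval]
      exact mul_nonneg hc.le (hrev.pow_nonneg _)
    refine ⟨fun x hx => ⟨?_, ?_⟩, fun x hx => ?_, fun x hx => ?_⟩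
    · simpa [heval0] using hmono hx.1
    · simpa [heval1] using hmono hx.2
    · simpa [heval0] using hmono hx
    · simpa [heval1] using hmono hx
end

section
/- Let L be a positive integer with L ≡ 1 (mod 4), let 0 < ε < 1/2, and let A_ε = [0, 1/2 − ε] ∪ [1/2 + ε, 1]. Then sup_{x∈A_ε} |(B_LΘ)(x) − Θ(x)| ≤ 2·e^{−2Lε²}. -/
open Polynomial

lemma aux_key (u : ℝ) (hu : 0 ≤ u) :
    (1-u)*Real.exp u + (1+u)*Real.exp (-u) ≤ 2 - u^2 := by
  set f : ℝ → ℝ := fun w => 2 - w^2 - ((1-w)*Real.exp w + (1+w)*Real.exp (-w)) with hf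
  have hderiv : ∀ v : ℝ, HasDerivAt f (v * (Real.exp v + Real.exp (-v) - 2)) v := by
    intro v
    have h1 : HasDerivAt (fun w : ℝ => (1-w)*Real.exp w) (-Real.exp v + (1-v)*Real.exp v) v := by
      exact ((hasDerivAt_id v).const_sub 1).mul (Real.hasDerivAt_exp v) |>.congr_deriv (by simp only [id_eq]; ring)
    have h2 : HasDerivAt (fun w : ℝ => (1+w)*Real.exp (-w)) (Real.exp (-v) + (1+v)*(-Real.exp (-v))) v := by
      have he : HasDerivAt (fun w : ℝ => Real.exp (-w)) (-Real.exp (-v)) v := by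
        exact ((Real.hasDerivAt_exp (-v)).comp v ((hasDerivAt_id v).neg)).congr_deriv (by simp)
      exact ((hasDerivAt_id v).const_add 1).mul he |>.congr_deriv (by simp only [id_eq]; ring)
    have h3 : HasDerivAt (fun w : ℝ => 2 - w^2) (-(2*v)) v := by
      simpa using ((hasDerivAt_pow 2 v).const_sub 2)
    have := h3.sub (h1.add h2)
    exact this.congr_deriv (by ring)
  have hmono : MonotoneOn f (Set.Ici (0:ℝ)) := by
    apply monotoneOn_of_deriv_nonneg (convex_Ici 0)
    · apply Continuous.continuousOn; fun_prop
    · intro v hv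
      exact (hderiv v).differentiableAt.differentiableWithinAt
    · intro v hv
      rw [(hderiv v).deriv]
      rw [interior_Ici] at hv
      have hv' : (0:ℝ) < v := hv
      have hprod : Real.exp v * Real.exp (-v) = 1 := by
        rw [← Real.exp_add]; simp
      have h2 : 2 ≤ Real.exp v + Real.exp (-v) := by
        nlinarith [sq_nonneg (Real.exp v - 1), Real.exp_pos (-v), Real.exp_pos v]
      nlinarith
  have h0 : f 0 = 0 := by simp [hf]; norm_num
  have := hmono (Set.self_mem_Ici) (Set.mem_Ici.2 hu) hu
  rw [h0] at this
  simp only [hf] at this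
  linarith

lemma factor_le (t : ℝ) (ht : 0 ≤ t) :
    ((1/2 - t) * Real.exp (4*t) + (1/2 + t)) * Real.exp (-(2*t)) ≤ Real.exp (-2*t^2) := by
  have hk := aux_key (2*t) (by linarith)
  have h1 : Real.exp (4*t) * Real.exp (-(2*t)) = Real.exp (2*t) := by
    rw [← Real.exp_add]; ring_nf
  have h2 : (1:ℝ) - 2*t^2 ≤ Real.exp (-2*t^2) := by
    have := Real.add_one_le_exp (-2*t^2); linarith
  have h3 : ((1/2 - t) * Real.exp (4*t) + (1/2 + t)) * Real.exp (-(2*t))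
      = (1/2 - t) * (Real.exp (4*t) * Real.exp (-(2*t))) + (1/2 + t) * Real.exp (-(2*t)) := by
    ring
  rw [h3, h1]
  have hk' : (1/2 - t) * Real.exp (2*t) + (1/2 + t) * Real.exp (-(2*t)) ≤ 1 - 2*t^2 := by
    have : Real.exp (-(2*t)) = Real.exp (-(2*t)) := rfl
    nlinarith [hk]
  linarith

lemma chernoff (L : ℕ) (y t : ℝ) (hy0 : 0 ≤ y) (ht : 0 ≤ t) (hy : y + t ≤ 1/2) :
    ∑ k ∈ Finset.range (L+1),
      (if L < 2*k then (L.choose k : ℝ) * y^k * (1-y)^(L-k) else 0)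
    ≤ Real.exp (-2*L*t^2) := by
  have hy1 : y ≤ 1/2 - t := by linarith
  have h1y : (0:ℝ) ≤ 1 - y := by linarith
  have step1 : ∑ k ∈ Finset.range (L+1),
      (if L < 2*k then (L.choose k : ℝ) * y^k * (1-y)^(L-k) else 0)
      ≤ ∑ k ∈ Finset.range (L+1),
        (y*Real.exp (4*t))^k * (1-y)^(L-k) * (L.choose k : ℝ) * Real.exp (-(2*t)*L) := by
    apply Finset.sum_le_sum
    intro k _
    have hterm : (0:ℝ) ≤ (L.choose k : ℝ) * y^k * (1-y)^(L-k) := by positivity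
    have hyk : (y*Real.exp (4*t))^k = y^k * Real.exp ((k:ℝ)*(4*t)) := by
      rw [mul_pow, ← Real.exp_nat_mul]
    split_ifs with h
    · have hc : (L:ℝ) < 2*k := by exact_mod_cast h
      have hge : (1:ℝ) ≤ Real.exp ((k:ℝ)*(4*t)) * Real.exp (-(2*t)*L) := by
        rw [← Real.exp_add]
        apply Real.one_le_exp
        nlinarith
      have := mul_le_mul_of_nonneg_left hge hterm
      rw [mul_one] at this
      calc (L.choose k : ℝ) * y^k * (1-y)^(L-k)
          ≤ (L.choose k : ℝ) * y^k * (1-y)^(L-k)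
              * (Real.exp ((k:ℝ)*(4*t)) * Real.exp (-(2*t)*L)) := this
        _ = (y*Real.exp (4*t))^k * (1-y)^(L-k) * (L.choose k : ℝ) * Real.exp (-(2*t)*L) := by
            rw [hyk]; ring
    · positivity
  have step2 : ∑ k ∈ Finset.range (L+1),
        (y*Real.exp (4*t))^k * (1-y)^(L-k) * (L.choose k : ℝ) * Real.exp (-(2*t)*L)
      = (y*Real.exp (4*t) + (1-y))^L * Real.exp (-(2*t)*L) := by
    rw [add_pow, Finset.sum_mul]
  have hbase0 : (0:ℝ) ≤ (y*Real.exp (4*t) + (1-y)) * Real.exp (-(2*t)) := by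
    have : (0:ℝ) ≤ y*Real.exp (4*t) := by positivity
    have := Real.exp_pos (-(2*t))
    nlinarith
  have step3 : (y*Real.exp (4*t) + (1-y))^L * Real.exp (-(2*t)*L)
      = ((y*Real.exp (4*t) + (1-y)) * Real.exp (-(2*t)))^L := by
    rw [mul_pow, ← Real.exp_nat_mul]
    ring_nf
  have hfac : (y*Real.exp (4*t) + (1-y)) * Real.exp (-(2*t)) ≤ Real.exp (-2*t^2) := by
    have hmono : y*Real.exp (4*t) + (1-y) ≤ (1/2 - t) * Real.exp (4*t) + (1/2 + t) := by
      have he : (1:ℝ) ≤ Real.exp (4*t) := Real.one_le_exp (by linarith)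
      nlinarith
    have := mul_le_mul_of_nonneg_right hmono (Real.exp_pos (-(2*t))).le
    calc (y*Real.exp (4*t) + (1-y)) * Real.exp (-(2*t))
        ≤ ((1/2 - t) * Real.exp (4*t) + (1/2 + t)) * Real.exp (-(2*t)) := this
      _ ≤ Real.exp (-2*t^2) := factor_le t ht
  have step4 : ((y*Real.exp (4*t) + (1-y)) * Real.exp (-(2*t)))^L ≤ (Real.exp (-2*t^2))^L :=
    pow_le_pow_left₀ hbase0 hfac L
  have step5 : (Real.exp (-2*t^2))^L = Real.exp (-2*L*t^2) := by
    rw [← Real.exp_nat_mul]; ring_nf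
  calc _ ≤ _ := step1
    _ = _ := step2
    _ = _ := step3
    _ ≤ _ := step4
    _ = _ := step5

lemma theta_div (L k : ℕ) (hL : L % 2 = 1) :
    theta ((k:ℝ)/(L:ℝ)) = if L < 2*k then 1 else 0 := by
  have hL0 : 0 < L := by omega
  have hL0' : (0:ℝ) < L := by exact_mod_cast hL0
  have hne : (k:ℝ)/(L:ℝ) ≠ 1/2 := by
    intro h
    have h2 : (2*k : ℝ) = (L:ℝ) := by field_simp at h; linarith
    have : (2*k : ℕ) = L := by exact_mod_cast h2
    omega
  have hiff : ((k:ℝ)/(L:ℝ) < 1/2) ↔ 2*k < L := by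
    rw [div_lt_div_iff₀ hL0' (by norm_num : (0:ℝ) < 2)]
    constructor
    · intro h; exact_mod_cast (by push_cast; linarith : (2*k:ℝ) < L)
    · intro h; have : (2*k:ℝ) < L := by exact_mod_cast h
      push_cast; linarith
  by_cases h : 2*k < L
  · rw [if_neg (by omega)]
    unfold theta
    rw [if_pos (hiff.2 h)]
  · have h' : L < 2*k := by omega
    rw [if_pos h']
    unfold theta
    rw [if_neg (by rw [hiff]; omega), if_neg hne]

lemma bern_eval (L : ℕ) (hL : L % 2 = 1) (x : ℝ) :
    (bernTheta L).eval x
      = ∑ k ∈ Finset.range (L+1),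
        (if L < 2*k then (L.choose k : ℝ) * x^k * (1-x)^(L-k) else 0) := by
  simp only [bernTheta, eval_finset_sum, eval_mul, eval_pow, eval_C, eval_X, eval_sub, eval_one]
  refine Finset.sum_congr rfl fun k _ => ?_
  rw [theta_div L k hL]
  split_ifs <;> ring

theorem stmt_16 (L : ℕ) (hL : L % 4 = 1) (ε : ℝ) (hε : 0 < ε) (hε' : ε < 1/2) :
    sSup ((fun x => |(bernTheta L).eval x - theta x|) ''
        (Set.Icc (0:ℝ) (1/2 - ε) ∪ Set.Icc (1/2 + ε) 1)) ≤
      2 * Real.exp (-2 * L * ε ^ 2) := by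
  have hLodd : L % 2 = 1 := by omega
  apply Real.sSup_le _ (by positivity)
  rintro v ⟨x, hx, rfl⟩
  have hexp := Real.exp_pos (-2*(L:ℝ)*ε^2)
  rcases hx with h | h
  · have hth : theta x = 0 := by
      unfold theta; rw [if_pos]; linarith [h.2]
    have hsum := chernoff L x ε h.1 hε.le (by linarith [h.2])
    have hnn : (0:ℝ) ≤ ∑ k ∈ Finset.range (L+1),
        (if L < 2*k then (L.choose k : ℝ) * x^k * (1-x)^(L-k) else 0) := by
      apply Finset.sum_nonneg
      intro k _
      have hx0 : (0:ℝ) ≤ x := h.1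
      have hx1 : (0:ℝ) ≤ 1 - x := by linarith [h.2]
      split_ifs <;> positivity
    simp only [bern_eval L hLodd, hth, sub_zero]
    rw [abs_of_nonneg hnn]
    calc _ ≤ Real.exp (-2*(L:ℝ)*ε^2) := hsum
      _ ≤ 2 * Real.exp (-2*(L:ℝ)*ε^2) := by linarith
  · have hx0 : (0:ℝ) ≤ x := by linarith [h.1]
    have hx1 : x ≤ 1 := h.2
    have hth : theta x = 1 := by
      unfold theta
      rw [if_neg (by linarith [h.1]), if_neg (by intro hh; rw [hh] at h; linarith [h.1])]
    set S := ∑ k ∈ Finset.range (L+1),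
        (if L < 2*k then (L.choose k : ℝ) * x^k * (1-x)^(L-k) else 0) with hS
    have hone : ∑ k ∈ Finset.range (L+1),
        (L.choose k : ℝ) * x^k * (1-x)^(L-k) = 1 := by
      calc ∑ k ∈ Finset.range (L+1), (L.choose k : ℝ) * x^k * (1-x)^(L-k)
          = ∑ k ∈ Finset.range (L+1), x^k * (1-x)^(L-k) * (L.choose k : ℝ) :=
            Finset.sum_congr rfl fun k _ => by ring
        _ = (x + (1-x))^L := (add_pow x (1-x) L).symm
        _ = 1 := by norm_num
    have hcompl : (1:ℝ) - S = ∑ k ∈ Finset.range (L+1),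
        (if L < 2*k then 0 else (L.choose k : ℝ) * x^k * (1-x)^(L-k)) := by
      have hadd : S + ∑ k ∈ Finset.range (L+1),
          (if L < 2*k then 0 else (L.choose k : ℝ) * x^k * (1-x)^(L-k)) = 1 := by
        conv_rhs => rw [← hone]
        rw [hS, ← Finset.sum_add_distrib]
        exact Finset.sum_congr rfl fun k _ => by split_ifs <;> ring
      linarith
    have hreflect : ∑ k ∈ Finset.range (L+1),
        (if L < 2*k then 0 else (L.choose k : ℝ) * x^k * (1-x)^(L-k))
        = ∑ k ∈ Finset.range (L+1),
        (if L < 2*k then (L.choose k : ℝ) * (1-x)^k * x^(L-k) else 0) := by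
      rw [← Finset.sum_range_reflect]
      refine Finset.sum_congr rfl fun j hj => ?_
      have hj' : j ≤ L := by
        simp only [Finset.mem_range] at hj; omega
      have h1 : L + 1 - 1 - j = L - j := by omega
      rw [h1]
      rw [Nat.choose_symm hj', Nat.sub_sub_self hj']
      split_ifs with ha hb hb
      · omega
      · rfl
      · ring
      · omega
    have hsum := chernoff L (1-x) ε (by linarith) hε.le (by linarith [h.1])
    simp only [show (1:ℝ)-(1-x) = x from by ring] at hsum
    rw [← hreflect, ← hcompl] at hsum
    have hSle : S ≤ 1 := by
      have : (0:ℝ) ≤ 1 - S := by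
        rw [hcompl]
        apply Finset.sum_nonneg
        intro k _
        have hx1' : (0:ℝ) ≤ 1 - x := by linarith
        split_ifs <;> positivity
      linarith
    simp only [bern_eval L hLodd, hth, ← hS]
    rw [abs_sub_comm, abs_of_nonneg (by linarith)]
    calc _ ≤ Real.exp (-2*(L:ℝ)*ε^2) := hsum
      _ ≤ 2 * Real.exp (-2*(L:ℝ)*ε^2) := by linarith
end

section
/- Let ℓ ≥ 1 be an integer and let 0 < a_1 < a_2 < ⋯ < a_ℓ < 1/2 be real numbers. Then there exists a unique real polynomial p of degree L = 4ℓ + 1 satisfying (i) p(x) + p(1−x) = 1 for all x ∈ ℝ, and (ii) p(0) = p(a_i) = p′(a_i) = 0 for i = 1, …, ℓ, where p′ is the derivative of p. Moreover this polynomial also satisfies (iii) p′ has exactly one zero in (0, a_1) and exactly one zero in (a_i, a_{i+1}) for each i = 1, …, ℓ−1, and p′(x) > 0 for all x ∈ (a_ℓ, 1/2] and for all x ≤ 0; and (iv) p(x) < 0 for all x < 0, and p(x) ≥ 0 for all x ∈ [0, 1/2] with equality if and only if x = 0 or x = a_i for some i ∈ {1, …, ℓ}. -/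
open Polynomial Finset

lemma prodNegEven (T : Finset ℝ) (f : ℝ → ℝ) (h : ∀ r ∈ T, f r < 0) (he : Even T.card) :
    0 < ∏ r ∈ T, f r := by
  have : ∏ r ∈ T, f r = (-1 : ℝ) ^ T.card * ∏ r ∈ T, (-(f r)) := by
    rw [← Finset.prod_const, ← Finset.prod_mul_distrib]
    exact Finset.prod_congr rfl fun r _ => by ring
  rw [this, he.neg_one_pow, one_mul]
  exact Finset.prod_pos fun r hr => by linarith [h r hr]

lemma sqDvd {q : ℝ[X]} {r : ℝ} (h0 : q.eval r = 0) (h1 : q.derivative.eval r = 0) :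
    (X - C r) ^ 2 ∣ q := by
  obtain ⟨k, hk⟩ := (dvd_iff_isRoot (p := q) (a := r)).2 h0
  have hd : q.derivative = k + (X - C r) * k.derivative := by
    rw [hk, derivative_mul]; simp
  have hkr : k.eval r = 0 := by
    have := h1
    rw [hd] at this; simpa using this
  obtain ⟨j, hj⟩ := (dvd_iff_isRoot (p := k) (a := r)).2 hkr
  exact ⟨j, by rw [hk, hj]; ring⟩

lemma posBall (h : ℝ[X]) (t : ℝ) (ht : 0 < h.eval t) :
    ∃ δ > 0, ∀ y : ℝ, |y - t| < δ → 0 < h.eval y := by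
  have ho : IsOpen {y : ℝ | 0 < h.eval y} := isOpen_lt continuous_const h.continuous
  rcases Metric.isOpen_iff.1 ho t ht with ⟨δ, hδ, hb⟩
  exact ⟨δ, hδ, fun y hy => hb (by simpa [Real.dist_eq] using hy)⟩

lemma negBall (h : ℝ[X]) (t : ℝ) (ht : h.eval t < 0) :
    ∃ δ > 0, ∀ y : ℝ, |y - t| < δ → h.eval y < 0 := by
  obtain ⟨δ, hδ, hb⟩ := posBall (-h) t (by simpa using ht)
  exact ⟨δ, hδ, fun y hy => by have := hb y hy; simp at this; linarith⟩

lemma spread (p : ℝ[X]) (u v x₀ : ℝ) (hnz : ∀ z ∈ Set.Ioo u v, p.eval z ≠ 0)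
    (hx₀ : x₀ ∈ Set.Ioo u v) (hp₀ : 0 < p.eval x₀) :
    ∀ x ∈ Set.Ioo u v, 0 < p.eval x := by
  intro x hx
  rcases lt_trichotomy (p.eval x) 0 with hneg | h0 | hpos
  · exfalso
    rcases lt_trichotomy x x₀ with hlt | heq | hgt
    · obtain ⟨z, hz, hz0⟩ := intermediate_value_Ioo (le_of_lt hlt)
        (p.continuous.continuousOn (s := Set.Icc x x₀))
        (show (0:ℝ) ∈ Set.Ioo (p.eval x) (p.eval x₀) from ⟨hneg, hp₀⟩)
      exact hnz z ⟨lt_trans hx.1 hz.1, lt_trans hz.2 hx₀.2⟩ hz0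
    · rw [heq] at hneg; linarith
    · obtain ⟨z, hz, hz0⟩ := intermediate_value_Ioo' (le_of_lt hgt)
        (p.continuous.continuousOn (s := Set.Icc x₀ x))
        (show (0:ℝ) ∈ Set.Ioo (p.eval x) (p.eval x₀) from ⟨hneg, hp₀⟩)
      exact hnz z ⟨lt_trans hx₀.1 hz.1, lt_trans hz.2 hx.2⟩ hz0
  · exact absurd h0 (hnz x hx)
  · exact hpos

lemma derivSymm (p : ℝ[X]) (hsym : ∀ x : ℝ, p.eval x + p.eval (1-x) = 1) :
    ∀ x : ℝ, p.derivative.eval (1 - x) = p.derivative.eval x := by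
  have hcomp : p.comp (C 1 - X) = C 1 - p :=
    Polynomial.funext fun x => by
      simp only [eval_comp, eval_sub, eval_C, eval_X, eval_one]
      linarith [hsym x]
  have h2 := congrArg derivative hcomp
  rw [derivative_comp] at h2
  simp only [derivative_sub, derivative_C, derivative_X, zero_sub, neg_mul, one_mul,
    derivative_one] at h2
  have h3 : (derivative p).comp (C 1 - X) = derivative p :=
    neg_injective (by rw [← h2])
  intro x
  have := congrArg (eval x) h3
  rw [eval_comp] at this
  simpa using this

set_option maxHeartbeats 1000000 in
lemma key (ℓ : ℕ) (hℓ : 1 ≤ ℓ) (b : ℕ → ℝ) (hb : ∀ i j, i < j → j ≤ ℓ → b i < b j)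
    (hb0 : b 0 = 0) (hbl : b ℓ < 1/2)
    (p : ℝ[X]) (hdeg : p.natDegree ≤ 4*ℓ+1)
    (hsym : ∀ x : ℝ, p.eval x + p.eval (1-x) = 1)
    (hz : ∀ i ≤ ℓ, p.eval (b i) = 0)
    (hz' : ∀ i, 1 ≤ i → i ≤ ℓ → p.derivative.eval (b i) = 0) :
    p.natDegree = 4*ℓ+1 ∧
    (∀ i < ℓ, ∃! x, x ∈ Set.Ioo (b i) (b (i+1)) ∧ p.derivative.eval x = 0) ∧
    (∀ x ∈ Set.Ioc (b ℓ) (1/2:ℝ), 0 < p.derivative.eval x) ∧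
    (∀ x : ℝ, x ≤ 0 → 0 < p.derivative.eval x) ∧
    (∀ x : ℝ, x < 0 → p.eval x < 0) ∧
    (∀ x ∈ Set.Icc (0:ℝ) (1/2), 0 ≤ p.eval x ∧ (p.eval x = 0 ↔ ∃ i, i ≤ ℓ ∧ x = b i)) := by
  classical
  -- basic order facts
  have hble : ∀ i j, i ≤ j → j ≤ ℓ → b i ≤ b j := by
    intro i j hij hj
    rcases eq_or_lt_of_le hij with rfl | h
    · exact le_refl _
    · exact le_of_lt (hb i j h hj)
  have hbpos : ∀ i, 1 ≤ i → i ≤ ℓ → 0 < b i := by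
    intro i h1 h2
    have := hb 0 i h1 h2; rw [hb0] at this; exact this
  have hblt : ∀ i ≤ ℓ, b i < 1/2 := fun i hi => lt_of_le_of_lt (hble i ℓ hi le_rfl) hbl
  have hb0le : ∀ i ≤ ℓ, 0 ≤ b i := by
    intro i hi
    rcases Nat.eq_zero_or_pos i with rfl | h
    · rw [hb0]
    · exact le_of_lt (hbpos i h hi)
  have hz0 : p.eval 0 = 0 := by have := hz 0 (Nat.zero_le _); rwa [hb0] at this
  have hp1 : p.eval 1 = 1 := by have := hsym 0; rw [hz0] at this; simpa using this
  have hp0 : p ≠ 0 := fun h => by rw [h] at hp1; simp at hp1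
  have hsymd := derivSymm p hsym
  have hphalf : p.eval (1/2 : ℝ) = 1/2 := by have := hsym (1/2); norm_num at this; linarith
  -- choose critical points
  have hcex : ∀ i : ℕ, ∃ x : ℝ, i < ℓ →
      x ∈ Set.Ioo (b i) (b (i+1)) ∧ p.derivative.eval x = 0 := by
    intro i
    by_cases h : i < ℓ
    · obtain ⟨x, hx, hx0⟩ := exists_deriv_eq_zero (f := fun y => p.eval y)
        (hb i (i+1) (Nat.lt_succ_self i) h) (p.continuous.continuousOn)
        (by show p.eval (b i) = p.eval (b (i+1)); rw [hz i (le_of_lt h), hz (i+1) h])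
      refine ⟨x, fun _ => ⟨hx, ?_⟩⟩
      rw [← Polynomial.deriv]; exact hx0
    · exact ⟨0, fun h' => absurd h' h⟩
  choose c hc using hcex
  have hc1 : ∀ i, i < ℓ → b i < c i := fun i h => ((hc i h).1).1
  have hc2 : ∀ i, i < ℓ → c i < b (i+1) := fun i h => ((hc i h).1).2
  have hcz : ∀ i, i < ℓ → p.derivative.eval (c i) = 0 := fun i h => (hc i h).2
  have hcpos : ∀ i, i < ℓ → 0 < c i := fun i h =>
    lt_of_le_of_lt (hb0le i (le_of_lt h)) (hc1 i h)
  have hclt : ∀ i, i < ℓ → c i < b ℓ ∨ (i + 1 = ℓ ∧ c i < b ℓ) := by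
    intro i h; left
    exact lt_of_lt_of_le (hc2 i h) (hble (i+1) ℓ h le_rfl)
  have hcle : ∀ i, i < ℓ → c i < b ℓ := fun i h =>
    lt_of_lt_of_le (hc2 i h) (hble (i+1) ℓ h le_rfl)
  -- the root finset
  set LA : Finset ℝ := (Finset.Icc 1 ℓ).image b with hLA
  set LC : Finset ℝ := (Finset.range ℓ).image c with hLC
  set SL : Finset ℝ := LA ∪ LC with hSL
  set S : Finset ℝ := SL ∪ SL.image (fun r => 1 - r) with hS
  have memSL : ∀ r ∈ SL, (0 < r ∧ r ≤ b ℓ) := by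
    intro r hr
    rw [hSL, Finset.mem_union] at hr
    rcases hr with hr | hr
    · rw [hLA, Finset.mem_image] at hr
      obtain ⟨i, hi, rfl⟩ := hr
      rw [Finset.mem_Icc] at hi
      exact ⟨hbpos i hi.1 hi.2, hble i ℓ hi.2 le_rfl⟩
    · rw [hLC, Finset.mem_image] at hr
      obtain ⟨i, hi, rfl⟩ := hr
      rw [Finset.mem_range] at hi
      exact ⟨hcpos i hi, le_of_lt (hcle i hi)⟩
  have memS_root : ∀ r ∈ S, p.derivative.eval r = 0 := by
    intro r hr
    rw [hS, Finset.mem_union] at hr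
    have base : ∀ s ∈ SL, p.derivative.eval s = 0 := by
      intro s hs
      rw [hSL, Finset.mem_union] at hs
      rcases hs with hs | hs
      · rw [hLA, Finset.mem_image] at hs
        obtain ⟨i, hi, rfl⟩ := hs
        rw [Finset.mem_Icc] at hi
        exact hz' i hi.1 hi.2
      · rw [hLC, Finset.mem_image] at hs
        obtain ⟨i, hi, rfl⟩ := hs
        rw [Finset.mem_range] at hi
        exact hcz i hi
    rcases hr with hr | hr
    · exact base r hr
    · rw [Finset.mem_image] at hr
      obtain ⟨s, hs, rfl⟩ := hr
      rw [← base s hs]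
      exact hsymd s
  -- membership characterization of S
  have memS_iff : ∀ r : ℝ, r ∈ S ↔ ((∃ j, 1 ≤ j ∧ j ≤ ℓ ∧ r = b j) ∨ (∃ j, j < ℓ ∧ r = c j) ∨
      (∃ j, 1 ≤ j ∧ j ≤ ℓ ∧ r = 1 - b j) ∨ (∃ j, j < ℓ ∧ r = 1 - c j)) := by
    intro r
    simp only [hS, hSL, hLA, hLC, Finset.mem_union, Finset.mem_image, Finset.mem_Icc,
      Finset.mem_range]
    constructor
    · rintro ((⟨j,⟨h1,h2⟩,rfl⟩|⟨j,hj,rfl⟩)|⟨s,((⟨j,⟨h1,h2⟩,rfl⟩|⟨j,hj,rfl⟩)),rfl⟩)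
      · exact Or.inl ⟨j, h1, h2, rfl⟩
      · exact Or.inr (Or.inl ⟨j, hj, rfl⟩)
      · exact Or.inr (Or.inr (Or.inl ⟨j, h1, h2, rfl⟩))
      · exact Or.inr (Or.inr (Or.inr ⟨j, hj, rfl⟩))
    · rintro (⟨j,h1,h2,rfl⟩|⟨j,hj,rfl⟩|⟨j,h1,h2,rfl⟩|⟨j,hj,rfl⟩)
      · exact Or.inl (Or.inl ⟨j, ⟨h1,h2⟩, rfl⟩)
      · exact Or.inl (Or.inr ⟨j, hj, rfl⟩)
      · exact Or.inr ⟨b j, Or.inl ⟨j, ⟨h1,h2⟩, rfl⟩, rfl⟩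
      · exact Or.inr ⟨c j, Or.inr ⟨j, hj, rfl⟩, rfl⟩
  -- cardinalities
  have hinjb : Set.InjOn b ↑(Finset.Icc 1 ℓ) := by
    intro i hi j hj hij
    simp only [Finset.coe_Icc, Set.mem_Icc] at hi hj
    by_contra hne
    rcases lt_or_gt_of_ne hne with h | h
    · exact absurd hij (ne_of_lt (hb i j h hj.2))
    · exact absurd hij.symm (ne_of_lt (hb j i h hi.2))
  have hcmono : ∀ i j, i < j → j < ℓ → c i < c j := by
    intro i j h hj
    calc c i < b (i+1) := hc2 i (lt_trans h hj)
    _ ≤ b j := hble (i+1) j h (le_of_lt hj)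
    _ < c j := hc1 j hj
  have hinjc : Set.InjOn c ↑(Finset.range ℓ) := by
    intro i hi j hj hij
    simp only [Finset.coe_range, Set.mem_Iio] at hi hj
    by_contra hne
    rcases lt_or_gt_of_ne hne with h | h
    · exact absurd hij (ne_of_lt (hcmono i j h hj))
    · exact absurd hij.symm (ne_of_lt (hcmono j i h hi))
  have cardLA : LA.card = ℓ := by
    rw [hLA, Finset.card_image_of_injOn hinjb, Nat.card_Icc]
    omega
  have cardLC : LC.card = ℓ := by
    rw [hLC, Finset.card_image_of_injOn hinjc, Finset.card_range]
  have disjLALC : Disjoint LA LC := by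
    rw [Finset.disjoint_left]
    intro r hra hrc
    rw [hLA, Finset.mem_image] at hra
    obtain ⟨i, hi, rfl⟩ := hra
    rw [Finset.mem_Icc] at hi
    rw [hLC, Finset.mem_image] at hrc
    obtain ⟨j, hj, heq⟩ := hrc
    rw [Finset.mem_range] at hj
    rcases le_or_gt i j with h | h
    · have h2 := hc1 j hj
      rw [heq] at h2
      linarith [hble i j h (le_of_lt hj)]
    · have h2 := hc2 j hj
      rw [heq] at h2
      linarith [hble (j+1) i h hi.2]
  have cardSL : SL.card = 2*ℓ := by
    rw [hSL, Finset.card_union_of_disjoint disjLALC, cardLA, cardLC]; ring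
  have disjS : Disjoint SL (SL.image (fun r => 1 - r)) := by
    rw [Finset.disjoint_left]
    intro r hr hr'
    obtain ⟨hrpos, hrle⟩ := memSL r hr
    rw [Finset.mem_image] at hr'
    obtain ⟨s, hs, rfl⟩ := hr'
    obtain ⟨hspos, hsle⟩ := memSL s hs
    linarith
  have cardS : S.card = 4*ℓ := by
    rw [hS, Finset.card_union_of_disjoint disjS,
      Finset.card_image_of_injOn (fun x _ y _ h => by linarith), cardSL]
    ring
  -- the factor polynomial Q
  set Q : ℝ[X] := ∏ r ∈ S, (X - C r) with hQ
  have hQmonic : Q.Monic := monic_prod_of_monic _ _ fun r _ => monic_X_sub_C r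
  have hQdeg : Q.natDegree = 4*ℓ := by
    rw [hQ, Polynomial.natDegree_prod _ _ (fun r _ => X_sub_C_ne_zero r)]
    simp only [Polynomial.natDegree_X_sub_C]
    rw [Finset.sum_const, smul_eq_mul, mul_one, cardS]
  have hQdvd : Q ∣ p.derivative := by
    apply Finset.prod_dvd_of_coprime
    · exact (pairwise_coprime_X_sub_C Function.injective_id).set_pairwise _
    · intro r hr
      exact dvd_iff_isRoot.2 (memS_root r hr)
  have hd0 : p.derivative ≠ 0 := by
    intro h
    have hnd : p.natDegree = 0 := Polynomial.natDegree_eq_zero_of_derivative_eq_zero h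
    obtain ⟨x, hx⟩ := Polynomial.natDegree_eq_zero.1 hnd
    rw [← hx] at hz0 hp1
    simp at hz0 hp1
    rw [hz0] at hp1
    exact one_ne_zero hp1.symm
  have hQled : Q.natDegree ≤ p.derivative.natDegree :=
    Polynomial.natDegree_le_of_dvd hQdvd hd0
  have hdled : p.derivative.natDegree ≤ p.natDegree - 1 := Polynomial.natDegree_derivative_le p
  have hndp : p.natDegree = 4*ℓ+1 := by omega
  have hndd : p.derivative.natDegree = 4*ℓ := by omega
  -- factorization p' = Q * C γ
  obtain ⟨t, ht⟩ := hQdvd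
  have ht0 : t ≠ 0 := by rintro rfl; rw [mul_zero] at ht; exact hd0 ht
  have htdeg : t.natDegree = 0 := by
    have hmul := Polynomial.natDegree_mul (hQmonic.ne_zero) ht0
    rw [← ht] at hmul
    omega
  obtain ⟨γ, hγ⟩ := Polynomial.natDegree_eq_zero.1 htdeg
  rw [← hγ] at ht
  have hγ0 : γ ≠ 0 := fun h => ht0 (by rw [← hγ, h, map_zero])
  have heval : ∀ x : ℝ, p.derivative.eval x = (∏ r ∈ S, (x - r)) * γ := by
    intro x
    rw [ht, eval_mul, eval_prod, eval_C]
    simp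
  -- positivity of the product on the middle interval
  have posProd : ∀ x : ℝ, b ℓ < x → x < 1 - b ℓ → 0 < ∏ r ∈ S, (x - r) := by
    intro x h1 h2
    rw [hS, Finset.prod_union disjS]
    apply mul_pos
    · exact Finset.prod_pos fun r hr => by linarith [(memSL r hr).2]
    · rw [Finset.prod_image (fun u _ v _ huv => by linarith)]
      apply prodNegEven
      · intro r hr; linarith [(memSL r hr).2]
      · rw [cardSL]; exact ⟨ℓ, by ring⟩
  -- the leading coefficient is positive
  obtain ⟨ξ, hξI, hξv⟩ := exists_deriv_eq_slope (fun y => p.eval y) hbl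
    p.continuous.continuousOn p.differentiable.differentiableOn
  have hξpos : 0 < p.derivative.eval ξ := by
    rw [← Polynomial.deriv, hξv]
    show 0 < (p.eval (1/2) - p.eval (b ℓ)) / (1/2 - b ℓ)
    rw [hphalf, hz ℓ le_rfl]
    apply div_pos <;> linarith
  have hγpos : 0 < γ := by
    have h1 := hξpos
    rw [heval ξ] at h1
    have h2 := posProd ξ hξI.1 (by linarith [hξI.2])
    by_contra hcon
    push_neg at hcon
    nlinarith
  -- conclusion (iii) parts 3,4
  have concl3 : ∀ x ∈ Set.Ioc (b ℓ) (1/2:ℝ), 0 < p.derivative.eval x := by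
    intro x hx
    rw [heval x]
    exact mul_pos (posProd x hx.1 (by linarith [hx.2])) hγpos
  have Spos : ∀ r ∈ S, 0 < r := by
    intro r hr
    rw [hS, Finset.mem_union] at hr
    rcases hr with hr | hr
    · exact (memSL r hr).1
    · rw [Finset.mem_image] at hr
      obtain ⟨s, hs, rfl⟩ := hr
      linarith [(memSL s hs).2]
  have concl4 : ∀ x : ℝ, x ≤ 0 → 0 < p.derivative.eval x := by
    intro x hx
    rw [heval x]
    apply mul_pos _ hγpos
    apply prodNegEven
    · intro r hr; linarith [Spos r hr]
    · rw [cardS]; exact ⟨2*ℓ, by ring⟩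
  -- all roots of p' lie in S
  have roots_in : ∀ x : ℝ, p.derivative.eval x = 0 → x ∈ S := by
    intro x hx
    rw [heval x] at hx
    rcases mul_eq_zero.1 hx with h | h
    · obtain ⟨r, hr, hr0⟩ := Finset.prod_eq_zero_iff.1 h
      have hxr : x = r := by linarith [sub_eq_zero.1 hr0]
      exact hxr ▸ hr
    · exact absurd h hγ0
  -- conclusion (iii) parts 1,2 : unique critical point per gap
  have concl2 : ∀ i, i < ℓ → ∃! x, x ∈ Set.Ioo (b i) (b (i+1)) ∧ p.derivative.eval x = 0 := by
    intro i hi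
    refine ⟨c i, ⟨⟨hc1 i hi, hc2 i hi⟩, hcz i hi⟩, ?_⟩
    rintro y ⟨hyI, hy0⟩
    have hyS := roots_in y hy0
    rw [memS_iff] at hyS
    have hble2 : b (i+1) ≤ b ℓ := hble (i+1) ℓ hi le_rfl
    rcases hyS with ⟨j, h1, h2, rfl⟩ | ⟨j, hj, rfl⟩ | ⟨j, h1, h2, rfl⟩ | ⟨j, hj, rfl⟩
    · exfalso
      rcases le_or_gt j i with h | h
      · exact absurd hyI.1 (not_lt.2 (hble j i h (le_of_lt hi)))
      · exact absurd hyI.2 (not_lt.2 (hble (i+1) j h h2))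
    · rcases lt_trichotomy j i with h | h | h
      · exfalso
        have h3 : c j < b i := lt_of_lt_of_le (hc2 j hj) (hble (j+1) i h (le_of_lt hi))
        linarith [hyI.1]
      · rw [h]
      · exfalso
        have h3 : b (i+1) ≤ b j := hble (i+1) j h (le_of_lt hj)
        linarith [hc1 j hj, hyI.2]
    · exfalso
      have h4 : b j ≤ b ℓ := hble j ℓ h2 le_rfl
      linarith [hyI.2, hbl]
    · exfalso
      have h4 : c j < b ℓ := hcle j hj
      linarith [hyI.2, hbl]
  -- p' has no double roots at points of S
  have hQfactor : ∀ r ∈ S, ¬ ((X - C r)^2 ∣ p.derivative) := by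
    intro r hr hdvd
    have hQeq : Q = p.derivative * C γ⁻¹ := by
      rw [ht, mul_assoc, ← C_mul, mul_inv_cancel₀ hγ0, C_1, mul_one]
    have h2 : (X - C r)^2 ∣ Q := hQeq ▸ hdvd.mul_right (C γ⁻¹)
    have hrS : (X - C r) * ∏ s ∈ S.erase r, (X - C s) = Q := by
      rw [hQ]; exact Finset.mul_prod_erase S (fun s => X - C s) hr
    obtain ⟨k, hk⟩ := h2
    have hdvd2 : (X - C r) ∣ ∏ s ∈ S.erase r, (X - C s) := by
      have hcancel : (X - C r) * ∏ s ∈ S.erase r, (X - C s) = (X - C r) * ((X - C r) * k) := by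
        rw [hrS, hk]; ring
      exact mul_left_cancel₀ (X_sub_C_ne_zero r) hcancel ▸ Dvd.intro k rfl
    have hroot := dvd_iff_isRoot.1 hdvd2
    rw [IsRoot, eval_prod] at hroot
    obtain ⟨s, hs, hs0⟩ := Finset.prod_eq_zero_iff.1 hroot
    simp only [eval_sub, eval_X, eval_C, sub_eq_zero] at hs0
    exact (Finset.ne_of_mem_erase hs) hs0.symm
  -- a_i is exactly a double root of p
  have hmult2 : ∀ i, 1 ≤ i → i ≤ ℓ → ∃ h : ℝ[X], p = (X - C (b i))^2 * h ∧ h.eval (b i) ≠ 0 := by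
    intro i h1 h2
    obtain ⟨h, hh⟩ := sqDvd (hz i h2) (hz' i h1 h2)
    refine ⟨h, hh, fun hEv => ?_⟩
    obtain ⟨g, hg⟩ := dvd_iff_isRoot.2 hEv
    have hp3 : p = (X - C (b i))^3 * g := by rw [hh, hg]; ring
    have hdd : (X - C (b i))^2 ∣ p.derivative := by
      have hcalc : p.derivative = (X - C (b i))^2 * (C 3 * g + (X - C (b i)) * g.derivative) := by
        rw [hp3, derivative_mul, derivative_pow, derivative_X_sub_C]
        norm_num
        ring
      exact hcalc ▸ Dvd.intro _ rfl
    have hbiS : b i ∈ S := (memS_iff _).2 (Or.inl ⟨i, h1, h2, rfl⟩)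
    exact hQfactor _ hbiS hdd
  -- p has no zeros strictly inside the gaps
  have nz : ∀ i, i < ℓ → ∀ z ∈ Set.Ioo (b i) (b (i+1)), p.eval z ≠ 0 := by
    intro i hi z hzI hzv
    obtain ⟨d, hdI, hd0⟩ := exists_deriv_eq_zero (f := fun y => p.eval y) hzI.1
      p.continuous.continuousOn
      (by show p.eval (b i) = p.eval z; rw [hz i (le_of_lt hi), hzv])
    obtain ⟨d', hdI', hd0'⟩ := exists_deriv_eq_zero (f := fun y => p.eval y) hzI.2
      p.continuous.continuousOn
      (by show p.eval z = p.eval (b (i+1)); rw [hz (i+1) hi, hzv])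
    rw [Polynomial.deriv] at hd0 hd0'
    obtain ⟨w, hw, huniq⟩ := concl2 i hi
    have h1 : d = w := huniq d ⟨⟨hdI.1, lt_trans hdI.2 hzI.2⟩, hd0⟩
    have h2 : d' = w := huniq d' ⟨⟨lt_trans hzI.1 hdI'.1, hdI'.2⟩, hd0'⟩
    rw [h1] at hdI
    rw [h2] at hdI'
    linarith [hdI.2, hdI'.1]
  -- positivity on the first gap
  have pos0 : ∀ x ∈ Set.Ioo (b 0) (b 1), 0 < p.eval x := by
    obtain ⟨h₀, hh₀⟩ := dvd_iff_isRoot.2 (show p.IsRoot 0 from hz0)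
    have hps : p = X * h₀ := by rw [hh₀]; simp
    have hder : p.derivative = h₀ + X * h₀.derivative := by
      rw [hps, derivative_mul, derivative_X, one_mul]
    have hpos : 0 < h₀.eval 0 := by
      have h4 := concl4 0 le_rfl
      rw [hder] at h4
      simpa using h4
    obtain ⟨δ, hδ, hball⟩ := posBall h₀ 0 hpos
    have hb1pos : 0 < b 1 := hbpos 1 le_rfl hℓ
    obtain ⟨x₀, hx₀1, hx₀2⟩ := exists_between (lt_min hb1pos hδ)
    have hpx₀ : 0 < p.eval x₀ := by
      rw [hps, eval_mul, eval_X]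
      refine mul_pos hx₀1 (hball x₀ ?_)
      rw [sub_zero, abs_of_pos hx₀1]
      exact lt_of_lt_of_le hx₀2 (min_le_right _ _)
    intro x hx
    refine spread p (b 0) (b 1) x₀ (nz 0 hℓ)
      ⟨by rw [hb0]; exact hx₀1, lt_of_lt_of_le hx₀2 (min_le_left _ _)⟩ hpx₀ x hx
  -- positivity on all the gaps, by induction
  have posGap : ∀ i, i < ℓ → ∀ x ∈ Set.Ioo (b i) (b (i+1)), 0 < p.eval x := by
    intro i
    induction i with
    | zero => intro _; exact pos0
    | succ k ih =>
      intro hk1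
      have hkℓ : k < ℓ := Nat.lt_of_succ_lt hk1
      have ihpos := ih hkℓ
      obtain ⟨h, hph, hh0⟩ := hmult2 (k+1) (Nat.succ_le_succ (Nat.zero_le k)) (le_of_lt hk1)
      have hrpos2 : b k < b (k+1) := hb k (k+1) (Nat.lt_succ_self k) (le_of_lt hk1)
      have hrlt : b (k+1) < b (k+2) := hb (k+1) (k+2) (Nat.lt_succ_self _) hk1
      have hhpos : 0 < h.eval (b (k+1)) := by
        rcases lt_trichotomy (h.eval (b (k+1))) 0 with hneg | hzero | hposs
        · exfalso
          obtain ⟨δ, hδ, hball⟩ := negBall h (b (k+1)) hneg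
          obtain ⟨y, hy1, hy2⟩ := exists_between
            (show max (b k) (b (k+1) - δ) < b (k+1) from max_lt hrpos2 (by linarith))
          have hmem : y ∈ Set.Ioo (b k) (b (k+1)) :=
            ⟨lt_of_le_of_lt (le_max_left _ _) hy1, hy2⟩
          have hpx := ihpos y hmem
          have hhx : h.eval y < 0 := by
            refine hball y ?_
            rw [abs_of_neg (by linarith : y - b (k+1) < 0)]
            have := lt_of_le_of_lt (le_max_right (b k) (b (k+1) - δ)) hy1
            linarith
          rw [hph, eval_mul, eval_pow, eval_sub, eval_X, eval_C] at hpx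
          nlinarith [sq_nonneg (y - b (k+1))]
        · exact absurd hzero hh0
        · exact hposs
      obtain ⟨δ, hδ, hball⟩ := posBall h (b (k+1)) hhpos
      obtain ⟨y, hy1, hy2⟩ := exists_between
        (show b (k+1) < min (b (k+2)) (b (k+1) + δ) from lt_min hrlt (by linarith))
      have hmem : y ∈ Set.Ioo (b (k+1)) (b (k+2)) :=
        ⟨hy1, lt_of_lt_of_le hy2 (min_le_left _ _)⟩
      have hpx : 0 < p.eval y := by
        rw [hph, eval_mul, eval_pow, eval_sub, eval_X, eval_C]
        have hhx : 0 < h.eval y := by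
          refine hball y ?_
          rw [abs_of_pos (by linarith : (0:ℝ) < y - b (k+1))]
          have := lt_of_lt_of_le hy2 (min_le_right (b (k+2)) (b (k+1) + δ))
          linarith
        exact mul_pos (pow_pos (by linarith) 2) hhx
      exact spread p (b (k+1)) (b (k+2)) y (nz (k+1) hk1) hmem hpx
  -- no zeros, and positivity, past the last gap
  have nz2 : ∀ z ∈ Set.Ioo (b ℓ) (1 - b ℓ), p.eval z ≠ 0 := by
    intro z hzI hzv
    obtain ⟨d, hdI, hd0⟩ := exists_deriv_eq_zero (f := fun y => p.eval y) hzI.1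
      p.continuous.continuousOn
      (by show p.eval (b ℓ) = p.eval z; rw [hz ℓ le_rfl, hzv])
    rw [Polynomial.deriv] at hd0
    have hdS := roots_in d hd0
    rw [memS_iff] at hdS
    rcases hdS with ⟨j,h1,h2,rfl⟩|⟨j,hj,rfl⟩|⟨j,h1,h2,rfl⟩|⟨j,hj,rfl⟩
    · exact absurd hdI.1 (not_lt.2 (hble j ℓ h2 le_rfl))
    · exact absurd hdI.1 (not_lt.2 (le_of_lt (hcle j hj)))
    · have h4 := hble j ℓ h2 le_rfl
      linarith [hdI.2, hzI.2]
    · have h4 := hcle j hj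
      linarith [hdI.2, hzI.2]
  have posTail := spread p (b ℓ) (1 - b ℓ) (1/2) nz2 ⟨hbl, by linarith⟩
    (by rw [hphalf]; norm_num)
  -- conclusion: negativity for x < 0
  have mono_neg : StrictMonoOn (fun y => p.eval y) (Set.Iic 0) := by
    apply strictMonoOn_of_deriv_pos (convex_Iic 0) p.continuous.continuousOn
    intro x hx
    rw [interior_Iic, Set.mem_Iio] at hx
    rw [Polynomial.deriv]
    exact concl4 x (le_of_lt hx)
  have concl5 : ∀ x : ℝ, x < 0 → p.eval x < 0 := by
    intro x hx
    have := mono_neg (Set.mem_Iic.2 (le_of_lt hx)) (Set.mem_Iic.2 le_rfl) hx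
    simp only [hz0] at this
    exact this
  -- conclusion (iv) second part
  have concl6 : ∀ x ∈ Set.Icc (0:ℝ) (1/2), 0 ≤ p.eval x ∧
      (p.eval x = 0 ↔ ∃ i, i ≤ ℓ ∧ x = b i) := by
    intro x hx
    by_cases hxb : ∃ i, i ≤ ℓ ∧ x = b i
    · obtain ⟨i, hi, rfl⟩ := hxb
      exact ⟨le_of_eq (hz i hi).symm, ⟨fun _ => ⟨i, hi, rfl⟩, fun _ => hz i hi⟩⟩
    · have hxpos : 0 < p.eval x := by
        push_neg at hxb
        have hx0 : 0 < x := by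
          rcases eq_or_lt_of_le hx.1 with h | h
          · exact absurd (by rw [← h, hb0]) (hxb 0 (Nat.zero_le _))
          · exact h
        set T := (Finset.range (ℓ+1)).filter (fun i => b i < x) with hT
        have hTne : T.Nonempty := ⟨0, by simp [hT, hb0, hx0]⟩
        set i₀ := T.max' hTne with hi₀
        have hi₀mem := T.max'_mem hTne
        have hmf : i₀ ∈ Finset.range (ℓ+1) ∧ b i₀ < x := by
          have h5 := Finset.mem_filter.1 hi₀mem
          exact ⟨h5.1, by simpa using h5.2⟩
        have hi₀le : i₀ ≤ ℓ := Nat.lt_succ_iff.1 (Finset.mem_range.1 hmf.1)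
        have hbi₀ : b i₀ < x := hmf.2
        rcases eq_or_lt_of_le hi₀le with heq | hi₀lt
        · refine posTail x ⟨?_, ?_⟩
          · rw [← heq]; exact hbi₀
          · linarith [hx.2, hbl]
        · have hle2 : x ≤ b (i₀+1) := by
            by_contra hcon
            push_neg at hcon
            have hmem2 : i₀ + 1 ∈ T :=
              Finset.mem_filter.2 ⟨Finset.mem_range.2 (Nat.succ_lt_succ hi₀lt), by simpa using hcon⟩
            have := Finset.le_max' T _ hmem2
            omega
          have hxlt : x < b (i₀+1) := lt_of_le_of_ne hle2 (hxb (i₀+1) hi₀lt)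
          exact posGap i₀ hi₀lt x ⟨hbi₀, hxlt⟩
      exact ⟨le_of_lt hxpos, ⟨fun h => absurd h (ne_of_gt hxpos), fun h => absurd h hxb⟩⟩
  exact ⟨hndp, concl2, concl3, concl4, concl5, concl6⟩


lemma sqDvd' {q : ℝ[X]} {r : ℝ} (h0 : q.eval r = 0) (h1 : q.derivative.eval r = 0) :
    (X - C r) ^ 2 ∣ q := by
  obtain ⟨k, hk⟩ := (dvd_iff_isRoot (p := q) (a := r)).2 h0
  have hd : q.derivative = k + (X - C r) * k.derivative := by rw [hk, derivative_mul]; simp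
  have hkr : k.eval r = 0 := by have := h1; rw [hd] at this; simpa using this
  obtain ⟨j, hj⟩ := (dvd_iff_isRoot (p := k) (a := r)).2 hkr
  exact ⟨j, by rw [hk, hj]; ring⟩

lemma derivSymm' (p : ℝ[X]) (hsym : ∀ x : ℝ, p.eval x + p.eval (1-x) = 1) :
    ∀ x : ℝ, p.derivative.eval (1 - x) = p.derivative.eval x := by
  have hcomp : p.comp (C 1 - X) = C 1 - p :=
    Polynomial.funext fun x => by
      simp only [eval_comp, eval_sub, eval_C, eval_X, eval_one]
      linarith [hsym x]
  have h2 := congrArg derivative hcomp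
  rw [derivative_comp] at h2
  simp only [derivative_sub, derivative_C, derivative_X, zero_sub, neg_mul, one_mul,
    derivative_one] at h2
  have h3 : (derivative p).comp (C 1 - X) = derivative p := neg_injective (by rw [← h2])
  intro x
  have := congrArg (eval x) h3
  rw [eval_comp] at this
  simpa using this

set_option maxHeartbeats 800000 in
lemma uniqKey (ℓ : ℕ) (hℓ : 1 ≤ ℓ) (b : ℕ → ℝ) (hb : ∀ i j, i < j → j ≤ ℓ → b i < b j)
    (hb0 : b 0 = 0) (hbl : b ℓ < 1/2)
    (p q : ℝ[X]) (hdp : p.natDegree ≤ 4*ℓ+1) (hdq : q.natDegree ≤ 4*ℓ+1)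
    (hsp : ∀ x : ℝ, p.eval x + p.eval (1-x) = 1) (hsq : ∀ x : ℝ, q.eval x + q.eval (1-x) = 1)
    (hzp : ∀ i ≤ ℓ, p.eval (b i) = 0) (hzq : ∀ i ≤ ℓ, q.eval (b i) = 0)
    (hzp' : ∀ i, 1 ≤ i → i ≤ ℓ → p.derivative.eval (b i) = 0)
    (hzq' : ∀ i, 1 ≤ i → i ≤ ℓ → q.derivative.eval (b i) = 0) :
    q = p := by
  classical
  have hble : ∀ i j, i ≤ j → j ≤ ℓ → b i ≤ b j := by
    intro i j hij hj
    rcases eq_or_lt_of_le hij with rfl | h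
    · exact le_refl _
    · exact le_of_lt (hb i j h hj)
  have hbpos : ∀ i, 1 ≤ i → i ≤ ℓ → 0 < b i := by
    intro i h1 h2; have := hb 0 i h1 h2; rw [hb0] at this; exact this
  have hblt : ∀ i ≤ ℓ, b i < 1/2 := fun i hi => lt_of_le_of_lt (hble i ℓ hi le_rfl) hbl
  set r : ℝ[X] := q - p with hr
  by_contra hne
  have hr0 : r ≠ 0 := by intro h; rw [hr, sub_eq_zero] at h; exact hne h
  -- roots of r
  have hrz : ∀ i ≤ ℓ, r.eval (b i) = 0 := by
    intro i hi; rw [hr, eval_sub, hzp i hi, hzq i hi]; ring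
  have hrz1 : r.eval 1 = 0 := by
    have h1 := hsp 0; have h2 := hsq 0
    have e1 : p.eval 0 = 0 := by have := hzp 0 (Nat.zero_le _); rwa [hb0] at this
    have e2 : q.eval 0 = 0 := by have := hzq 0 (Nat.zero_le _); rwa [hb0] at this
    rw [hr, eval_sub]
    simp only [sub_zero] at h1 h2
    rw [e1] at h1; rw [e2] at h2
    linarith
  have hrzs : ∀ i, 1 ≤ i → i ≤ ℓ → r.eval (1 - b i) = 0 := by
    intro i h1 h2
    have hp := hsp (b i); have hq := hsq (b i)
    rw [hzp i h2] at hp; rw [hzq i h2] at hq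
    rw [hr, eval_sub]; linarith
  have hrz' : ∀ i, 1 ≤ i → i ≤ ℓ → r.derivative.eval (b i) = 0 := by
    intro i h1 h2
    rw [hr, derivative_sub, eval_sub, hzp' i h1 h2, hzq' i h1 h2]; ring
  have hrzs' : ∀ i, 1 ≤ i → i ≤ ℓ → r.derivative.eval (1 - b i) = 0 := by
    intro i h1 h2
    have hp := derivSymm' p hsp (b i)
    have hq := derivSymm' q hsq (b i)
    have h3 := hrz' i h1 h2
    rw [hr, derivative_sub, eval_sub] at h3 ⊢
    rw [hp, hq]
    exact h3
  -- root set with multiplicity two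
  set R : Finset ℝ := (Finset.Icc 1 ℓ).image b ∪ (Finset.Icc 1 ℓ).image (fun i => 1 - b i) with hR
  have memR : ∀ s ∈ R, (∃ j, 1 ≤ j ∧ j ≤ ℓ ∧ s = b j) ∨ (∃ j, 1 ≤ j ∧ j ≤ ℓ ∧ s = 1 - b j) := by
    intro s hs
    rw [hR, Finset.mem_union, Finset.mem_image, Finset.mem_image] at hs
    rcases hs with ⟨j, hj, rfl⟩ | ⟨j, hj, rfl⟩
    · rw [Finset.mem_Icc] at hj; exact Or.inl ⟨j, hj.1, hj.2, rfl⟩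
    · rw [Finset.mem_Icc] at hj; exact Or.inr ⟨j, hj.1, hj.2, rfl⟩
  have memRbound : ∀ s ∈ R, (0 < s ∧ s < 1/2) ∨ (1/2 < s ∧ s < 1) := by
    intro s hs
    rcases memR s hs with ⟨j, h1, h2, rfl⟩ | ⟨j, h1, h2, rfl⟩
    · exact Or.inl ⟨hbpos j h1 h2, hblt j h2⟩
    · right; constructor <;> [linarith [hblt j h2]; linarith [hbpos j h1 h2]]
  have hinjb : Set.InjOn b ↑(Finset.Icc 1 ℓ) := by
    intro i hi j hj hij
    simp only [Finset.coe_Icc, Set.mem_Icc] at hi hj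
    by_contra hne'
    rcases lt_or_gt_of_ne hne' with h | h
    · exact absurd hij (ne_of_lt (hb i j h hj.2))
    · exact absurd hij.symm (ne_of_lt (hb j i h hi.2))
  have cardR : R.card = 2*ℓ := by
    rw [hR, Finset.card_union_of_disjoint, Finset.card_image_of_injOn hinjb,
      Finset.card_image_of_injOn (fun i hi j hj hij => hinjb hi hj (by linarith)),
      Nat.card_Icc]
    · omega
    · rw [Finset.disjoint_left]
      intro s hs1 hs2
      rw [Finset.mem_image] at hs1 hs2
      obtain ⟨i, hi, rfl⟩ := hs1
      obtain ⟨j, hj, heq⟩ := hs2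
      rw [Finset.mem_Icc] at hi hj
      have := hblt i hi.2; have := hblt j hj.2
      linarith
  -- the big divisor
  set P : ℝ[X] := ∏ s ∈ R, (X - C s)^2 with hP
  have hPdvd : P ∣ r := by
    apply Finset.prod_dvd_of_coprime
    · intro u hu v hv huv
      exact IsCoprime.pow (pairwise_coprime_X_sub_C Function.injective_id huv)
    · intro s hs
      rcases memR s hs with ⟨j, h1, h2, rfl⟩ | ⟨j, h1, h2, rfl⟩
      · exact sqDvd' (hrz j h2) (hrz' j h1 h2)
      · exact sqDvd' (hrzs j h1 h2) (hrzs' j h1 h2)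
  have hd1 : (X - C (0:ℝ)) ∣ r := dvd_iff_isRoot.2 (by
    have := hrz 0 (Nat.zero_le _); rwa [hb0] at this)
  have hd2 : (X - C (1:ℝ)) ∣ r := dvd_iff_isRoot.2 hrz1
  have hc01 : IsCoprime (X - C (0:ℝ)) (X - C (1:ℝ)) :=
    pairwise_coprime_X_sub_C Function.injective_id (by norm_num)
  have hc0P : IsCoprime (X - C (0:ℝ)) P :=
    IsCoprime.prod_right fun s hs => IsCoprime.pow_right
      (pairwise_coprime_X_sub_C Function.injective_id (by
        rcases memRbound s hs with h | h
        · intro hh; rw [← hh] at h; linarith [h.1]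
        · intro hh; rw [← hh] at h; linarith [h.1]))
  have hc1P : IsCoprime (X - C (1:ℝ)) P :=
    IsCoprime.prod_right fun s hs => IsCoprime.pow_right
      (pairwise_coprime_X_sub_C Function.injective_id (by
        rcases memRbound s hs with h | h
        · intro hh; rw [← hh] at h; linarith [h.2]
        · intro hh; rw [← hh] at h; linarith [h.2]))
  have hDdvd : (X - C (0:ℝ)) * ((X - C 1) * P) ∣ r :=
    IsCoprime.mul_dvd (IsCoprime.mul_right hc01 hc0P) hd1
      (IsCoprime.mul_dvd hc1P hd2 hPdvd)
  have hPmonic : P.Monic := monic_prod_of_monic _ _ fun s _ => (monic_X_sub_C s).pow 2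
  have hPdeg : P.natDegree = 4*ℓ := by
    rw [hP, Polynomial.natDegree_prod _ _ (fun s _ => pow_ne_zero _ (X_sub_C_ne_zero s))]
    have : ∀ s ∈ R, ((X - C s)^2).natDegree = 2 := fun s _ => by
      rw [Polynomial.natDegree_pow, natDegree_X_sub_C]
    rw [Finset.sum_congr rfl this, Finset.sum_const, smul_eq_mul, cardR]
    ring
  have hDmonic : ((X - C (0:ℝ)) * ((X - C 1) * P)).Monic :=
    (monic_X_sub_C 0).mul ((monic_X_sub_C 1).mul hPmonic)
  have hDdeg : ((X - C (0:ℝ)) * ((X - C 1) * P)).natDegree = 4*ℓ + 2 := by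
    rw [Polynomial.natDegree_mul (X_sub_C_ne_zero 0)
      (mul_ne_zero (X_sub_C_ne_zero 1) hPmonic.ne_zero),
      Polynomial.natDegree_mul (X_sub_C_ne_zero 1) hPmonic.ne_zero,
      natDegree_X_sub_C, natDegree_X_sub_C, hPdeg]
    ring
  have hrdeg : r.natDegree ≤ 4*ℓ+1 := by
    rw [hr]
    exact le_trans (Polynomial.natDegree_sub_le q p) (by omega)
  have := Polynomial.natDegree_le_of_dvd hDdvd hr0
  omega


lemma derivSqEval (r : ℝ) (A : ℝ[X]) : ((X - C r)^2 * A).derivative.eval r = 0 := by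
  rw [derivative_mul, derivative_pow, derivative_X_sub_C]
  simp

set_option maxHeartbeats 1000000 in
lemma existKey (ℓ : ℕ) (hℓ : 1 ≤ ℓ) (b : ℕ → ℝ) (hb : ∀ i j, i < j → j ≤ ℓ → b i < b j)
    (hb0 : b 0 = 0) (hbl : b ℓ < 1/2) :
    ∃ p : ℝ[X], p.natDegree ≤ 4*ℓ+1 ∧ (∀ x : ℝ, p.eval x + p.eval (1-x) = 1) ∧
      (∀ i ≤ ℓ, p.eval (b i) = 0) ∧
      (∀ i, 1 ≤ i → i ≤ ℓ → p.derivative.eval (b i) = 0) := by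
  classical
  have hble : ∀ i j, i ≤ j → j ≤ ℓ → b i ≤ b j := by
    intro i j hij hj
    rcases eq_or_lt_of_le hij with rfl | h
    · exact le_refl _
    · exact le_of_lt (hb i j h hj)
  have hbpos : ∀ i, 1 ≤ i → i ≤ ℓ → 0 < b i := by
    intro i h1 h2; have := hb 0 i h1 h2; rw [hb0] at this; exact this
  have hblt : ∀ i ≤ ℓ, b i < 1/2 := fun i hi => lt_of_le_of_lt (hble i ℓ hi le_rfl) hbl
  set F : ℝ[X] := X * ∏ i ∈ Finset.Icc 1 ℓ, (X - C (b i))^2 with hF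
  set G : ℝ[X] := F.comp (C 1 - X) with hG
  have hFmonic : F.Monic :=
    monic_X.mul (monic_prod_of_monic _ _ fun i _ => (monic_X_sub_C (b i)).pow 2)
  have hFdeg : F.natDegree = 2*ℓ+1 := by
    rw [hF, Polynomial.natDegree_mul X_ne_zero
      (monic_prod_of_monic _ _ fun i _ => (monic_X_sub_C (b i)).pow 2).ne_zero,
      natDegree_X, Polynomial.natDegree_prod _ _
        (fun i _ => pow_ne_zero _ (X_sub_C_ne_zero (b i)))]
    have : ∀ i ∈ Finset.Icc 1 ℓ, ((X - C (b i))^2).natDegree = 2 := fun i _ => by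
      rw [Polynomial.natDegree_pow, natDegree_X_sub_C]
    rw [Finset.sum_congr rfl this, Finset.sum_const, smul_eq_mul, Nat.card_Icc]
    omega
  have hFeval : ∀ x : ℝ, F.eval x = x * ∏ i ∈ Finset.Icc 1 ℓ, (x - b i)^2 := by
    intro x
    rw [hF, eval_mul, eval_X, eval_prod]
    congr 1
    exact Finset.prod_congr rfl fun i _ => by rw [eval_pow, eval_sub, eval_X, eval_C]
  have hGeval : ∀ x : ℝ, G.eval x = F.eval (1 - x) := by
    intro x
    rw [hG, eval_comp, eval_sub, eval_C, eval_X]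
  have hGne : ∀ r : ℝ, 0 ≤ r → r < 1/2 → G.eval r ≠ 0 := by
    intro r h0 h2
    rw [hGeval, hFeval]
    apply mul_ne_zero (by linarith)
    apply Finset.prod_ne_zero_iff.2
    intro i hi
    rw [Finset.mem_Icc] at hi
    have h3 := hblt i hi.2
    have h4 := hbpos i hi.1 hi.2
    exact pow_ne_zero _ (ne_of_gt (by linarith))
  have hcop : IsCoprime F G := by
    rw [hF]
    apply IsCoprime.mul_left
    · have hX : (X : ℝ[X]) = X - C 0 := by simp
      rw [hX]
      exact (irreducible_X_sub_C (0:ℝ)).coprime_iff_not_dvd.2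
        (fun hd => hGne 0 le_rfl (by norm_num) (dvd_iff_isRoot.1 hd))
    · apply IsCoprime.prod_left
      intro i hi
      rw [Finset.mem_Icc] at hi
      apply IsCoprime.pow_left
      exact (irreducible_X_sub_C (b i)).coprime_iff_not_dvd.2
        (fun hd => hGne (b i) (le_of_lt (hbpos i hi.1 hi.2)) (hblt i hi.2)
          (dvd_iff_isRoot.1 hd))
  have hF0 : F ≠ 0 := hFmonic.ne_zero
  have hGdeg : G.natDegree = 2*ℓ+1 := by
    rw [hG, Polynomial.natDegree_comp]
    have h1 : (C (1:ℝ) - X).natDegree = 1 := by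
      have : (C (1:ℝ) - X) = -(X - C 1) := by ring
      rw [this, Polynomial.natDegree_neg, natDegree_X_sub_C]
    rw [h1, hFdeg, mul_one]
  have hG0 : G ≠ 0 := fun h => by
    have := hGne 0 le_rfl (by norm_num)
    rw [h] at this
    simp at this
  obtain ⟨u, v, huv⟩ := hcop
  set G' : ℝ[X] := G * C (G.leadingCoeff)⁻¹ with hG'
  have hG'monic : G'.Monic := monic_mul_leadingCoeff_inv hG0
  have hG'deg : G'.natDegree = 2*ℓ+1 := by
    rw [hG', Polynomial.natDegree_mul hG0 (fun h => by
      simp only [C_eq_zero, inv_eq_zero, leadingCoeff_eq_zero] at h; exact hG0 h),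
      natDegree_C, add_zero, hGdeg]
  set u' : ℝ[X] := u %ₘ G' with hu'
  set d : ℝ[X] := u /ₘ G' with hd
  have hmod : u' + G' * d = u := modByMonic_add_div u G'
  set v' : ℝ[X] := v + C (G.leadingCoeff)⁻¹ * d * F with hv'
  have hid : u' * F + v' * G = 1 := by
    have hu : u = u' + G * C (G.leadingCoeff)⁻¹ * d := by rw [← hmod, hG']
    rw [hv']
    linear_combination huv - F * hu
  have hu'deg : u'.natDegree ≤ 2*ℓ := by
    by_cases h : u' = 0
    · rw [h]; simp
    · have h1 := degree_modByMonic_lt u hG'monic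
      rw [← hu'] at h1
      have h2 : G'.degree = ((2*ℓ+1 : ℕ) : WithBot ℕ) := by
        rw [Polynomial.degree_eq_natDegree hG'monic.ne_zero, hG'deg]
      rw [h2] at h1
      have h3 := (Polynomial.natDegree_lt_iff_degree_lt h).2 h1
      omega
  have hv'deg : v'.natDegree ≤ 2*ℓ := by
    by_cases h : v' = 0
    · rw [h]; simp
    · have hvG : v' * G = 1 - u' * F := by linear_combination hid
      have h1 : (v' * G).natDegree = v'.natDegree + (2*ℓ+1) := by
        rw [Polynomial.natDegree_mul h hG0, hGdeg]
      have h2 : (1 - u' * F : ℝ[X]).natDegree ≤ 4*ℓ+1 := by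
        refine le_trans (Polynomial.natDegree_sub_le 1 (u' * F)) ?_
        simp only [natDegree_one]
        have := Polynomial.natDegree_mul_le (p := u') (q := F)
        rw [hFdeg] at this
        omega
      rw [hvG, h1] at *
      omega
  set w : ℝ[X] := C (1/2 : ℝ) * (u' + v'.comp (C 1 - X)) with hw
  have hwdeg : w.natDegree ≤ 2*ℓ := by
    refine le_trans (Polynomial.natDegree_C_mul_le _ _) ?_
    refine le_trans (Polynomial.natDegree_add_le _ _) ?_
    have h1 : (v'.comp (C 1 - X)).natDegree ≤ 2*ℓ := by
      rw [Polynomial.natDegree_comp]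
      have : (C (1:ℝ) - X).natDegree = 1 := by
        have h2 : (C (1:ℝ) - X) = -(X - C 1) := by ring
        rw [h2, Polynomial.natDegree_neg, natDegree_X_sub_C]
      rw [this, mul_one]
      exact hv'deg
    omega
  refine ⟨F * w, ?_, ?_, ?_, ?_⟩
  · refine le_trans (Polynomial.natDegree_mul_le) ?_
    rw [hFdeg]; omega
  · -- symmetry
    intro x
    have e1 := congrArg (eval x) hid
    have e2 := congrArg (eval (1-x)) hid
    simp only [eval_add, eval_mul, eval_one] at e1 e2
    rw [hGeval] at e1 e2
    have hxx : (1 : ℝ) - (1 - x) = x := by ring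
    rw [hxx] at e2
    have hwx : ∀ y : ℝ, w.eval y = 1/2 * (u'.eval y + v'.eval (1 - y)) := by
      intro y
      rw [hw, eval_mul, eval_C, eval_add, eval_comp, eval_sub, eval_C, eval_X]
    simp only [eval_mul, hwx, hxx]
    linear_combination (1/2 : ℝ) * e1 + (1/2 : ℝ) * e2
  · -- zeros of p
    intro i hi
    rw [eval_mul]
    have hFz : F.eval (b i) = 0 := by
      rcases Nat.eq_zero_or_pos i with rfl | h
      · rw [hb0, hFeval]; ring
      · rw [hFeval]
        apply mul_eq_zero_of_right
        apply Finset.prod_eq_zero (Finset.mem_Icc.2 ⟨h, hi⟩)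
        ring
    rw [hFz, zero_mul]
  · -- critical points
    intro i h1 h2
    have hmem : i ∈ Finset.Icc 1 ℓ := Finset.mem_Icc.2 ⟨h1, h2⟩
    have hFi : F * w = (X - C (b i))^2 *
        ((X * ∏ j ∈ (Finset.Icc 1 ℓ).erase i, (X - C (b j))^2) * w) := by
      rw [hF, ← Finset.mul_prod_erase _ _ hmem]
      ring
    rw [hFi]
    exact derivSqEval (b i) _



/-- The defining properties of the polynomial of Lemma 3.3:
degree 4ℓ+1, the symmetry p(x)+p(1-x)=1, and p(0)=p(aᵢ)=p'(aᵢ)=0 for i=1,…,ℓ. -/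
def definingProps (ℓ : ℕ) (a : ℕ → ℝ) (p : Polynomial ℝ) : Prop :=
  p.degree = (4*ℓ+1 : ℕ) ∧
  (∀ x : ℝ, p.eval x + p.eval (1-x) = 1) ∧
  p.eval 0 = 0 ∧
  (∀ i, 1 ≤ i → i ≤ ℓ → p.eval (a i) = 0 ∧ p.derivative.eval (a i) = 0)


theorem stmt_17 (ℓ : ℕ) (hℓ : 1 ≤ ℓ) (a : ℕ → ℝ)
    (ha1 : 0 < a 1) (hmono : ∀ i, 1 ≤ i → i < ℓ → a i < a (i+1))
    (haℓ : a ℓ < 1/2) :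
    ∃ p : Polynomial ℝ,
      -- existence: (i) and (ii)
      definingProps ℓ a p ∧
      -- uniqueness
      (∀ q : Polynomial ℝ, definingProps ℓ a q → q = p) ∧
      -- (iii)
      ((∃! x, x ∈ Set.Ioo (0:ℝ) (a 1) ∧ p.derivative.eval x = 0) ∧
       (∀ i, 1 ≤ i → i < ℓ →
          ∃! x, x ∈ Set.Ioo (a i) (a (i+1)) ∧ p.derivative.eval x = 0) ∧
       (∀ x ∈ Set.Ioc (a ℓ) (1/2 : ℝ), 0 < p.derivative.eval x) ∧
       (∀ x : ℝ, x ≤ 0 → 0 < p.derivative.eval x)) ∧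
      -- (iv)
      ((∀ x : ℝ, x < 0 → p.eval x < 0) ∧
       (∀ x ∈ Set.Icc (0:ℝ) (1/2), 0 ≤ p.eval x ∧
          (p.eval x = 0 ↔ x = 0 ∨ ∃ i, 1 ≤ i ∧ i ≤ ℓ ∧ x = a i))) := by
  classical
  set b : ℕ → ℝ := fun i => if i = 0 then 0 else a i with hbdef
  have hb0 : b 0 = 0 := by simp [hbdef]
  have hbeq : ∀ i, 1 ≤ i → b i = a i := fun i hi => by
    simp [hbdef, Nat.one_le_iff_ne_zero.1 hi]
  have amono : ∀ j i, 1 ≤ i → i < j → j ≤ ℓ → a i < a j := by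
    intro j
    induction j with
    | zero => intro i _ h _; omega
    | succ k ih =>
      intro i h1 h2 h3
      rcases Nat.lt_succ_iff_lt_or_eq.1 h2 with h | h
      · have hk1 : 1 ≤ k := le_trans h1 (Nat.le_of_lt_succ (Nat.lt_succ_of_lt h))
        exact lt_trans (ih i h1 h (by omega)) (hmono k hk1 (by omega))
      · subst h; exact hmono i h1 (by omega)
  have hb : ∀ i j, i < j → j ≤ ℓ → b i < b j := by
    intro i j hij hj
    have hj1 : 1 ≤ j := by omega
    rw [hbeq j hj1]
    rcases Nat.eq_zero_or_pos i with rfl | hi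
    · rw [hb0]
      rcases eq_or_lt_of_le hj1 with h | h
      · rw [← h]; exact ha1
      · exact lt_trans ha1 (amono j 1 le_rfl h hj)
    · rw [hbeq i hi]
      exact amono j i hi hij hj
  have hbl : b ℓ < 1/2 := by rw [hbeq ℓ hℓ]; exact haℓ
  obtain ⟨p, hdeg, hsym, hz, hz'⟩ := existKey ℓ hℓ b hb hb0 hbl
  obtain ⟨hnd, hconcl2, hconcl3, hconcl4, hconcl5, hconcl6⟩ :=
    key ℓ hℓ b hb hb0 hbl p hdeg hsym hz hz'
  have hp0 : p ≠ 0 := fun h => by rw [h, Polynomial.natDegree_zero] at hnd; omega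
  have hdp : definingProps ℓ a p := by
    refine ⟨?_, hsym, ?_, ?_⟩
    · rw [Polynomial.degree_eq_natDegree hp0, hnd]
    · have := hz 0 (Nat.zero_le _); rwa [hb0] at this
    · intro i h1 h2
      constructor
      · have := hz i h2; rwa [hbeq i h1] at this
      · have := hz' i h1 h2; rwa [hbeq i h1] at this
  refine ⟨p, hdp, ?_, ⟨?_, ?_, ?_, hconcl4⟩, ⟨hconcl5, ?_⟩⟩
  · -- uniqueness
    intro q hq
    obtain ⟨hqdeg, hqsym, hq0, hqz⟩ := hq
    have hqnd : q.natDegree = 4*ℓ+1 := Polynomial.natDegree_eq_of_degree_eq_some hqdeg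
    refine uniqKey ℓ hℓ b hb hb0 hbl p q (le_of_eq hnd) (le_of_eq hqnd) hsym hqsym hz
      (fun i hi => ?_) hz' (fun i h1 h2 => ?_)
    · rcases Nat.eq_zero_or_pos i with rfl | h
      · rwa [hb0]
      · rw [hbeq i h]; exact (hqz i h hi).1
    · rw [hbeq i h1]; exact (hqz i h1 h2).2
  · have := hconcl2 0 hℓ
    rwa [hb0, hbeq 1 le_rfl] at this
  · intro i h1 h2
    have := hconcl2 i h2
    rwa [hbeq i h1, hbeq (i+1) (by omega)] at this
  · intro x hx
    exact hconcl3 x (by rw [hbeq ℓ hℓ]; exact hx)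
  · intro x hx
    obtain ⟨hge, hiff⟩ := hconcl6 x hx
    refine ⟨hge, hiff.trans ?_⟩
    constructor
    · rintro ⟨i, hi, rfl⟩
      rcases Nat.eq_zero_or_pos i with rfl | h
      · exact Or.inl hb0
      · exact Or.inr ⟨i, h, hi, hbeq i h⟩
    · rintro (rfl | ⟨i, h1, h2, rfl⟩)
      · exact ⟨0, Nat.zero_le _, hb0.symm⟩
      · exact ⟨i, h2, (hbeq i h1).symm⟩
end

section
/- For every integer ℓ ≥ 1 there exist real numbers 0 < a_1 < a_2 < ⋯ < a_ℓ < 1/2 such that the unique polynomial p of degree 4ℓ + 1 satisfying p(x) + p(1−x) = 1 for all x ∈ ℝ and p(0) = p(a_i) = p′(a_i) = 0 for i = 1, …, ℓ, also satisfies p(x) ≤ 1 for all x ∈ [0, 1/2] (and hence p ∈ 𝒫). -/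
open Polynomial Real
open Polynomial.Chebyshev

lemma T_eval_neg (k : ℕ) (y : ℝ) :
    (T ℝ (k:ℤ)).eval (-y) = (-1)^k * (T ℝ (k:ℤ)).eval y := by
  induction k using Nat.strong_induction_on with
  | _ k ih =>
    match k with
    | 0 => simp [T_zero]
    | 1 => simp [T_one]
    | (m+2) =>
      have h := Polynomial.Chebyshev.T_add_two ℝ (m : ℤ)
      have e1 := ih m (by omega) 
      have e2 := ih (m+1) (by omega)
      have : ((m:ℤ)+2) = ((m+2 : ℕ) : ℤ) := by push_cast; ring
      rw [← this] at *
      have hm1 : ((m+1 : ℕ) : ℤ) = (m:ℤ)+1 := by push_cast; ring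
      rw [hm1] at e2
      rw [h]
      simp only [eval_sub, eval_mul, eval_ofNat, eval_X, e1, e2]
      ring

lemma T_eval_ge (y : ℝ) (hy : 1 ≤ y) : ∀ k : ℕ, 1 ≤ (T ℝ (k:ℤ)).eval y ∧
    (T ℝ (k:ℤ)).eval y ≤ (T ℝ ((k:ℤ)+1)).eval y := by
  intro k
  induction k with
  | zero => simp [T_zero, T_one, hy]
  | succ m ih =>
    obtain ⟨h1, h2⟩ := ih
    have hm : ((m+1 : ℕ) : ℤ) = (m:ℤ)+1 := by push_cast; ring
    rw [hm]
    have key : (T ℝ ((m:ℤ)+1)).eval y ≤ (T ℝ ((m:ℤ)+2)).eval y := by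
      have h := Polynomial.Chebyshev.T_add_two ℝ (m : ℤ)
      have : (T ℝ ((m:ℤ)+2)).eval y = 2 * y * (T ℝ ((m:ℤ)+1)).eval y - (T ℝ (m:ℤ)).eval y := by
        rw [h]; simp
      rw [this]
      nlinarith
    exact ⟨le_trans h1 h2, by rw [show ((m:ℤ)+1+1) = (m:ℤ)+2 by ring]; exact key⟩

lemma T_natDegree_le : ∀ k : ℕ, (T ℝ (k:ℤ)).natDegree ≤ k ∧ (T ℝ ((k:ℤ)+1)).natDegree ≤ k+1 := by
  intro k
  induction k with
  | zero => simp [T_zero, T_one, natDegree_X_le]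
  | succ m ih =>
    obtain ⟨h1, h2⟩ := ih
    have hm : ((m+1 : ℕ) : ℤ) = (m:ℤ)+1 := by push_cast; ring
    rw [hm]
    refine ⟨h2, ?_⟩
    have h := Polynomial.Chebyshev.T_add_two ℝ (m : ℤ)
    have : ((m:ℤ)+1+1) = (m:ℤ)+2 := by ring
    rw [this, h]
    refine le_trans (natDegree_sub_le _ _) ?_
    simp only [max_le_iff]
    constructor
    · refine le_trans (natDegree_mul_le) ?_
      have : (2 * X : ℝ[X]).natDegree ≤ 1 := by
        refine le_trans (natDegree_mul_le) ?_
        simp [natDegree_X_le]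
      omega
    · omega

lemma T_deriv_eval (n : ℕ) (θ : ℝ) (h1 : Real.sin θ ≠ 0) (h2 : Real.sin (n * θ) = 0) :
    (T ℝ (n:ℤ)).derivative.eval (Real.cos θ) = 0 := by
  have hA : HasDerivAt (fun t : ℝ => (T ℝ (n:ℤ)).eval (Real.cos t))
      ((T ℝ (n:ℤ)).derivative.eval (Real.cos θ) * (-Real.sin θ)) θ :=
    ((T ℝ (n:ℤ)).hasDerivAt (Real.cos θ)).comp θ (Real.hasDerivAt_cos θ)
  have hfun : (fun t : ℝ => (T ℝ (n:ℤ)).eval (Real.cos t)) = fun t : ℝ => Real.cos (n * t) := by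
    funext t
    exact_mod_cast Polynomial.Chebyshev.T_real_cos t (n : ℤ)
  have hB : HasDerivAt (fun t : ℝ => Real.cos (n * t)) (-Real.sin (n * θ) * n) θ := by
    have h := (Real.hasDerivAt_cos ((n:ℝ) * θ)).comp θ ((hasDerivAt_id θ).const_mul (n:ℝ))
    have : -Real.sin ((n:ℝ) * θ) * ((n:ℝ) * 1) = -Real.sin (n * θ) * n := by ring
    rw [this] at h
    exact h
  rw [hfun] at hA
  have := hA.unique hB
  rw [h2] at this
  simp only [neg_zero, zero_mul] at this
  rcases mul_eq_zero.mp this with h | h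
  · exact h
  · exact absurd (neg_eq_zero.mp h) h1

noncomputable def p0 (ℓ : ℕ) : ℝ[X] :=
  C (1/2:ℝ) * (1 + (T ℝ ((4*ℓ+1 : ℕ):ℤ)).comp (C 2 * X - C 1))

lemma p0_eval (ℓ : ℕ) (x : ℝ) :
    (p0 ℓ).eval x = 1/2 * (1 + (T ℝ ((4*ℓ+1 : ℕ):ℤ)).eval (2*x - 1)) := by
  simp [p0, eval_comp]

lemma p0_deriv_eval (ℓ : ℕ) (x : ℝ) :
    (p0 ℓ).derivative.eval x = (T ℝ ((4*ℓ+1 : ℕ):ℤ)).derivative.eval (2*x - 1) := by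
  simp only [p0, derivative_mul, derivative_C, derivative_add, derivative_one,
    derivative_comp, zero_add, zero_mul]
  have : Polynomial.derivative (C (2:ℝ) * X - C 1) = C 2 := by
    simp
  rw [this]
  simp [eval_comp]
lemma neg_one_pow (ℓ : ℕ) : ((-1:ℝ))^(4*ℓ+1) = -1 := by
  rw [pow_succ, pow_mul]; norm_num

lemma T_eval_neg' (ℓ : ℕ) (y : ℝ) :
    (T ℝ ((4*ℓ+1 : ℕ):ℤ)).eval (-y) = -(T ℝ ((4*ℓ+1 : ℕ):ℤ)).eval y := by
  rw [_root_.T_eval_neg, neg_one_pow, neg_one_mul]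

lemma p0_symm (ℓ : ℕ) (x : ℝ) : (p0 ℓ).eval x + (p0 ℓ).eval (1-x) = 1 := by
  rw [p0_eval, p0_eval]
  have : (2*(1-x) - 1) = -(2*x-1) := by ring
  rw [this, T_eval_neg']
  ring

lemma T_eval_one (n : ℕ) : (T ℝ (n:ℤ)).eval 1 = 1 := by
  have := Polynomial.Chebyshev.T_real_cos 0 (n:ℤ)
  simpa using this

lemma p0_zero (ℓ : ℕ) : (p0 ℓ).eval 0 = 0 := by
  rw [p0_eval]
  have : (2*(0:ℝ) - 1) = -1 := by ring
  rw [this, show (-1 : ℝ) = -(1:ℝ) by ring, T_eval_neg', _root_.T_eval_one]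
  ring

lemma p0_mem_Icc (ℓ : ℕ) (x : ℝ) (hx : x ∈ Set.Icc (0:ℝ) 1) :
    (p0 ℓ).eval x ∈ Set.Icc (0:ℝ) 1 := by
  obtain ⟨h0, h1⟩ := hx
  have hb : 2*x - 1 ∈ Set.Icc (-1:ℝ) 1 := by constructor <;> linarith
  have := Real.cos_arccos hb.1 hb.2
  rw [p0_eval, ← this, Polynomial.Chebyshev.T_real_cos]
  have c1 := Real.cos_le_one (((4*ℓ+1 : ℕ):ℤ) * Real.arccos (2*x-1))
  have c2 := Real.neg_one_le_cos (((4*ℓ+1 : ℕ):ℤ) * Real.arccos (2*x-1))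
  constructor <;> [linarith; linarith]

lemma p0_ge_one (ℓ : ℕ) (x : ℝ) (hx : 1 ≤ x) : 1 ≤ (p0 ℓ).eval x := by
  rw [p0_eval]
  have := (T_eval_ge (2*x-1) (by linarith) (4*ℓ+1)).1
  linarith

lemma p0_le_zero (ℓ : ℕ) (x : ℝ) (hx : x ≤ 0) : (p0 ℓ).eval x ≤ 0 := by
  rw [p0_eval]
  have h1 : (1:ℝ) ≤ -(2*x-1) := by linarith
  have := (T_eval_ge (-(2*x-1)) h1 (4*ℓ+1)).1
  rw [T_eval_neg'] at this
  linarith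


noncomputable def av (ℓ i : ℕ) : ℝ := sin (i * π / (4*ℓ+1)) ^ 2

lemma angle_pos (ℓ i : ℕ) (h1 : 1 ≤ i) : 0 < (i:ℝ) * π / (4*ℓ+1) := by
  apply div_pos
  · exact mul_pos (by exact_mod_cast h1) Real.pi_pos
  · positivity

lemma angle_lt (ℓ i : ℕ) (h2 : i ≤ ℓ) : (i:ℝ) * π / (4*ℓ+1) < π/4 := by
  rw [div_lt_div_iff₀ (by positivity) (by norm_num)]
  have hi : (i:ℝ) ≤ ℓ := by exact_mod_cast h2
  nlinarith [Real.pi_pos]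

lemma av_pos (ℓ i : ℕ) (h1 : 1 ≤ i) (h2 : i ≤ ℓ) : 0 < av ℓ i := by
  have h := Real.sin_pos_of_pos_of_lt_pi (angle_pos ℓ i h1)
    (lt_trans (angle_lt ℓ i h2) (by linarith [Real.pi_pos]))
  rw [av]; positivity

lemma av_mono (ℓ i j : ℕ) (h1 : 1 ≤ i) (hij : i < j) (h2 : j ≤ ℓ) : av ℓ i < av ℓ j := by
  have hij' : (i:ℝ) * π / (4*ℓ+1) < (j:ℝ) * π / (4*ℓ+1) := by
    have : (i:ℝ) < (j:ℝ) := by exact_mod_cast hij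
    have h4 : (0:ℝ) < 4*ℓ+1 := by positivity
    rw [div_lt_div_iff_of_pos_right h4]
    nlinarith [Real.pi_pos]
  have hs : sin ((i:ℝ) * π / (4*ℓ+1)) < sin ((j:ℝ) * π / (4*ℓ+1)) := by
    apply Real.strictMonoOn_sin
    · constructor
      · linarith [angle_pos ℓ i h1, Real.pi_pos]
      · linarith [angle_lt ℓ i (le_trans (le_of_lt hij) h2), Real.pi_pos]
    · constructor
      · linarith [angle_pos ℓ j (by omega), Real.pi_pos]
      · linarith [angle_lt ℓ j h2, Real.pi_pos]
    · exact hij'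
  have hpos : 0 < sin ((i:ℝ) * π / (4*ℓ+1)) :=
    Real.sin_pos_of_pos_of_lt_pi (angle_pos ℓ i h1)
      (lt_trans (angle_lt ℓ i (le_trans (le_of_lt hij) h2)) (by linarith [Real.pi_pos]))
  rw [av, av]
  nlinarith

lemma av_lt_half (ℓ i : ℕ) (h1 : 1 ≤ i) (h2 : i ≤ ℓ) : av ℓ i < 1/2 := by
  have h4 : sin ((i:ℝ) * π / (4*ℓ+1)) < sin (π/4) := by
    apply Real.strictMonoOn_sin
    · constructor
      · linarith [angle_pos ℓ i h1, Real.pi_pos]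
      · linarith [angle_lt ℓ i h2, Real.pi_pos]
    · constructor <;> linarith [Real.pi_pos]
    · exact angle_lt ℓ i h2
  rw [Real.sin_pi_div_four] at h4
  have hpos : 0 < sin ((i:ℝ) * π / (4*ℓ+1)) :=
    Real.sin_pos_of_pos_of_lt_pi (angle_pos ℓ i h1)
      (lt_trans (angle_lt ℓ i h2) (by linarith [Real.pi_pos]))
  have : sin ((i:ℝ) * π / (4*ℓ+1))^2 < (Real.sqrt 2 / 2)^2 := by nlinarith
  have hs : (Real.sqrt 2 / 2)^2 = 1/2 := by
    rw [div_pow, Real.sq_sqrt (by norm_num : (2:ℝ) ≥ 0)]; norm_num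
  rw [av]; rw [hs] at this; exact this
lemma av_cos (ℓ i : ℕ) : 2 * av ℓ i - 1 = Real.cos (π - 2 * ((i:ℝ) * π / (4*ℓ+1))) := by
  rw [av, Real.cos_pi_sub, Real.cos_two_mul]
  have h := Real.sin_sq_add_cos_sq ((i:ℝ)*π/(4*ℓ+1))
  linarith

lemma n_theta (ℓ i : ℕ) : ((4*ℓ+1 : ℕ):ℝ) * (π - 2 * ((i:ℝ) * π / (4*ℓ+1))) =
    ((4*ℓ+1 : ℕ):ℝ) * π - 2 * i * π := by
  have h : ((4*ℓ+1 : ℕ):ℝ) = 4*(ℓ:ℝ)+1 := by push_cast; ring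
  rw [h]
  field_simp

lemma p0_at_av (ℓ i : ℕ) (h1 : 1 ≤ i) (h2 : i ≤ ℓ) : (p0 ℓ).eval (av ℓ i) = 0 := by
  rw [p0_eval, av_cos, Polynomial.Chebyshev.T_real_cos]
  rw [show ((((4*ℓ+1:ℕ):ℤ)):ℝ) = ((4*ℓ+1:ℕ):ℝ) by push_cast; ring]
  rw [n_theta]
  have : ((4*ℓ+1 : ℕ):ℝ) * π - 2 * i * π = ((4*ℓ+1 : ℕ):ℝ) * π - (i * (2 * π)) := by ring
  rw [this, Real.cos_nat_mul_pi_sub, Real.cos_nat_mul_two_pi]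
  rw [show ((-1:ℝ))^(4*ℓ+1) = -1 from neg_one_pow ℓ]
  ring

lemma theta_mem (ℓ i : ℕ) (h1 : 1 ≤ i) (h2 : i ≤ ℓ) :
    0 < π - 2 * ((i:ℝ) * π / (4*ℓ+1)) ∧ π - 2 * ((i:ℝ) * π / (4*ℓ+1)) < π := by
  constructor
  · linarith [angle_lt ℓ i h2, Real.pi_pos]
  · linarith [angle_pos ℓ i h1]

lemma p0_deriv_at_av (ℓ i : ℕ) (h1 : 1 ≤ i) (h2 : i ≤ ℓ) :
    (p0 ℓ).derivative.eval (av ℓ i) = 0 := by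
  rw [p0_deriv_eval, av_cos]
  apply T_deriv_eval
  · exact ne_of_gt (Real.sin_pos_of_pos_of_lt_pi (theta_mem ℓ i h1 h2).1 (theta_mem ℓ i h1 h2).2)
  · show Real.sin _ = 0
    rw [n_theta]
    have : ((4*ℓ+1 : ℕ):ℝ) * π - 2 * i * π = ((4*(ℓ:ℤ)+1 - 2*i : ℤ):ℝ) * π := by push_cast; ring
    rw [this, Real.sin_int_mul_pi]

lemma count_quad (x a b : ℝ) (hab : a ≠ b) :
    Multiset.count x ({a, a, b, b} : Multiset ℝ) = (if x = a then 2 else if x = b then 2 else 0) := by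
  classical
  simp [Multiset.count_cons, Multiset.count_singleton]
  split_ifs <;> simp_all

noncomputable def M (ℓ : ℕ) : Multiset ℝ :=
  0 ::ₘ (1/2 : ℝ) ::ₘ 1 ::ₘ (Multiset.range ℓ).bind
    (fun i => {av ℓ (i+1), av ℓ (i+1), 1 - av ℓ (i+1), 1 - av ℓ (i+1)})

lemma card_M (ℓ : ℕ) : Multiset.card (M ℓ) = 4*ℓ+3 := by
  have hb : Multiset.card ((Multiset.range ℓ).bind
      (fun i => ({av ℓ (i+1), av ℓ (i+1), 1 - av ℓ (i+1), 1 - av ℓ (i+1)} : Multiset ℝ))) = 4*ℓ := by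
    rw [Multiset.card_bind]
    simp only [Function.comp_def]
    rw [Multiset.map_congr rfl (fun i _ => by rfl)]
    simp [Multiset.map_const', mul_comm]
  simp [M, hb]
  ring

lemma bind_count_eq (ℓ : ℕ) (x : ℝ) :
    Multiset.count x ((Multiset.range ℓ).bind
      (fun i => {av ℓ (i+1), av ℓ (i+1), 1 - av ℓ (i+1), 1 - av ℓ (i+1)})) =
    ∑ i ∈ Finset.range ℓ,
      (if x = av ℓ (i+1) then 2 else if x = 1 - av ℓ (i+1) then 2 else 0) := by
  classical
  rw [Multiset.count_bind, Finset.sum_eq_multiset_sum]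
  rw [show Multiset.range ℓ = (Finset.range ℓ).val from rfl]
  congr 1
  apply Multiset.map_congr rfl
  intro i hi
  rw [count_quad]
  have h1 := av_pos ℓ (i+1) (by omega) (by simp at hi; omega)
  have h2 := av_lt_half ℓ (i+1) (by omega) (by simp at hi; omega)
  intro h
  nlinarith

lemma unique_p (ℓ : ℕ) (hℓ : 1 ≤ ℓ) (p : ℝ[X])
    (hdeg : p.degree = (4*ℓ+1 : ℕ))
    (hsym : ∀ x : ℝ, p.eval x + p.eval (1-x) = 1)
    (h0 : p.eval 0 = 0)
    (hroots : ∀ i, 1 ≤ i → i ≤ ℓ → p.eval (av ℓ i) = 0 ∧ p.derivative.eval (av ℓ i) = 0) :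
    p = p0 ℓ := by
  classical
  set d : ℝ[X] := p - p0 ℓ with hdDef
  have hdev : ∀ x : ℝ, d.eval x = p.eval x - (p0 ℓ).eval x := by
    intro x; simp [hdDef]
  have hdsym : ∀ x : ℝ, d.eval x = - d.eval (1-x) := by
    intro x
    have h1 := hsym x
    have h2 := p0_symm ℓ x
    rw [hdev, hdev]; linarith
  -- polynomial-level antisymmetry
  have hcomp_eval : ∀ x : ℝ, (d.comp (C 1 - X)).eval x = d.eval (1 - x) := by
    intro x; simp [eval_comp]
  have hpoly : d = - d.comp (C 1 - X) := by
    apply Polynomial.funext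
    intro x
    rw [eval_neg, hcomp_eval, hdsym]
  have hderiv_symm : ∀ x : ℝ, d.derivative.eval x = d.derivative.eval (1 - x) := by
    intro x
    have h := congrArg Polynomial.derivative hpoly
    rw [derivative_neg, derivative_comp] at h
    have h2 : Polynomial.derivative (C (1:ℝ) - X) = - 1 := by simp
    rw [h2] at h
    have := congrArg (Polynomial.eval x) h
    simp [eval_comp] at this
    linarith [this]
  -- root facts
  have hd0 : d.eval 0 = 0 := by rw [hdev, h0, p0_zero]; ring
  have hd1 : d.eval 1 = 0 := by
    have h := hdsym 1
    simp only [sub_self] at h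
    rw [h, hd0, neg_zero]
  have hdhalf : d.eval (1/2) = 0 := by
    have := hdsym (1/2); norm_num at this; linarith
  have hda : ∀ i, 1 ≤ i → i ≤ ℓ → d.eval (av ℓ i) = 0 := by
    intro i hi1 hi2
    rw [hdev, (hroots i hi1 hi2).1, p0_at_av ℓ i hi1 hi2]; ring
  have hda' : ∀ i, 1 ≤ i → i ≤ ℓ → d.derivative.eval (av ℓ i) = 0 := by
    intro i hi1 hi2
    have : d.derivative = p.derivative - (p0 ℓ).derivative := by simp [hdDef]
    rw [this]
    simp [(hroots i hi1 hi2).2, p0_deriv_at_av ℓ i hi1 hi2]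
  have hdma : ∀ i, 1 ≤ i → i ≤ ℓ → d.eval (1 - av ℓ i) = 0 := by
    intro i hi1 hi2
    have := hdsym (1 - av ℓ i)
    simp at this
    rw [this, hda i hi1 hi2]; ring
  have hdma' : ∀ i, 1 ≤ i → i ≤ ℓ → d.derivative.eval (1 - av ℓ i) = 0 := by
    intro i hi1 hi2
    rw [← hderiv_symm]
    exact hda' i hi1 hi2
  -- suppose d ≠ 0
  by_cases hne : d = 0
  · exact sub_eq_zero.mp (by rw [← hdDef]; exact hne)
  · exfalso
    -- degree bound
    have hpnat : p.natDegree = 4*ℓ+1 := natDegree_eq_of_degree_eq_some hdeg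
    have hp0nat : (p0 ℓ).natDegree ≤ 4*ℓ+1 := by
      rw [p0]
      refine le_trans (natDegree_mul_le) ?_
      have hC : (C (1/2:ℝ)).natDegree = 0 := natDegree_C _
      have h1 : ((1 : ℝ[X]) + (T ℝ ((4*ℓ+1 : ℕ):ℤ)).comp (C 2 * X - C 1)).natDegree ≤ 4*ℓ+1 := by
        refine le_trans (natDegree_add_le _ _) ?_
        have hcomp : ((T ℝ ((4*ℓ+1 : ℕ):ℤ)).comp (C 2 * X - C 1)).natDegree ≤ 4*ℓ+1 := by
          refine le_trans (natDegree_comp_le) ?_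
          have hT := (T_natDegree_le (4*ℓ+1)).1
          have hu : (C (2:ℝ) * X - C 1).natDegree ≤ 1 := by
            refine le_trans (natDegree_sub_le _ _) ?_
            simp only [max_le_iff]
            constructor
            · refine le_trans (natDegree_mul_le) ?_
              simp [natDegree_X_le]
            · simp
          calc (T ℝ ((4*ℓ+1 : ℕ):ℤ)).natDegree * (C (2:ℝ) * X - C 1).natDegree
              ≤ (4*ℓ+1) * 1 := Nat.mul_le_mul hT hu
            _ = 4*ℓ+1 := by ring
        simp only [natDegree_one, max_le_iff]
        exact ⟨by omega, hcomp⟩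
      omega
    have hdnat : d.natDegree ≤ 4*ℓ+1 := by
      refine le_trans (natDegree_sub_le _ _) ?_
      omega
    -- multiset of roots
    have hM : M ℓ ≤ d.roots := by
      rw [Multiset.le_iff_count]
      intro x
      rw [Polynomial.count_roots]
      by_cases hxa : ∃ i, i < ℓ ∧ x = av ℓ (i+1)
      · obtain ⟨i₀, hi₀, rfl⟩ := hxa
        have hb1 := av_pos ℓ (i₀+1) (by omega) (by omega)
        have hb2 := av_lt_half ℓ (i₀+1) (by omega) (by omega)
        have hmul : 1 < d.rootMultiplicity (av ℓ (i₀+1)) := by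
          rw [one_lt_rootMultiplicity_iff_isRoot hne]
          exact ⟨hda (i₀+1) (by omega) (by omega), hda' (i₀+1) (by omega) (by omega)⟩
        have hcnt : Multiset.count (av ℓ (i₀+1)) (M ℓ) ≤ 2 := by
          rw [M]
          rw [Multiset.count_cons_of_ne (by intro h; linarith)]
          rw [Multiset.count_cons_of_ne (by intro h; linarith)]
          rw [Multiset.count_cons_of_ne (by intro h; linarith)]
          rw [bind_count_eq]
          have : ∀ i ∈ Finset.range ℓ, (if av ℓ (i₀+1) = av ℓ (i+1) then 2 else
              if av ℓ (i₀+1) = 1 - av ℓ (i+1) then 2 else 0) ≤ if i = i₀ then 2 else 0 := by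
            intro i hi
            simp only [Finset.mem_range] at hi
            by_cases hii : i = i₀
            · subst hii
              split_ifs <;> omega
            · have hne2 : av ℓ (i₀+1) ≠ av ℓ (i+1) := by
                rcases Nat.lt_or_ge i i₀ with h | h
                · exact (ne_of_gt (av_mono ℓ (i+1) (i₀+1) (by omega) (by omega) (by omega)))
                · exact (ne_of_lt (av_mono ℓ (i₀+1) (i+1) (by omega) (by omega) (by omega)))
              have hne3 : av ℓ (i₀+1) ≠ 1 - av ℓ (i+1) := by
                have := av_pos ℓ (i+1) (by omega) (by omega)
                have := av_lt_half ℓ (i+1) (by omega) (by omega)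
                intro h; rw [h] at hb2; linarith
              rw [if_neg hne2, if_neg hne3, if_neg hii]
          calc _ ≤ ∑ i ∈ Finset.range ℓ, (if i = i₀ then 2 else 0) := Finset.sum_le_sum this
            _ = 2 := by rw [Finset.sum_ite_eq' (Finset.range ℓ)]; simp [hi₀]
        omega
      · by_cases hxb : ∃ i, i < ℓ ∧ x = 1 - av ℓ (i+1)
        · obtain ⟨i₀, hi₀, rfl⟩ := hxb
          have hb1 := av_pos ℓ (i₀+1) (by omega) (by omega)
          have hb2 := av_lt_half ℓ (i₀+1) (by omega) (by omega)
          have hmul : 1 < d.rootMultiplicity (1 - av ℓ (i₀+1)) := by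
            rw [one_lt_rootMultiplicity_iff_isRoot hne]
            exact ⟨hdma (i₀+1) (by omega) (by omega), hdma' (i₀+1) (by omega) (by omega)⟩
          have hcnt : Multiset.count (1 - av ℓ (i₀+1)) (M ℓ) ≤ 2 := by
            rw [M]
            rw [Multiset.count_cons_of_ne (by intro h; linarith)]
            rw [Multiset.count_cons_of_ne (by intro h; linarith)]
            rw [Multiset.count_cons_of_ne (by intro h; linarith)]
            rw [bind_count_eq]
            have : ∀ i ∈ Finset.range ℓ, (if 1 - av ℓ (i₀+1) = av ℓ (i+1) then 2 else
                if 1 - av ℓ (i₀+1) = 1 - av ℓ (i+1) then 2 else 0) ≤ if i = i₀ then 2 else 0 := by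
              intro i hi
              simp only [Finset.mem_range] at hi
              by_cases hii : i = i₀
              · subst hii
                split_ifs <;> omega
              · have hp1 := av_pos ℓ (i+1) (by omega) (by omega)
                have hp2 := av_lt_half ℓ (i+1) (by omega) (by omega)
                have hne2 : 1 - av ℓ (i₀+1) ≠ av ℓ (i+1) := by intro h; linarith
                have hne3 : 1 - av ℓ (i₀+1) ≠ 1 - av ℓ (i+1) := by
                  intro h
                  have heq : av ℓ (i₀+1) = av ℓ (i+1) := by linarith
                  rcases Nat.lt_or_ge i i₀ with hlt | hge
                  · exact absurd heq.symm (ne_of_lt (av_mono ℓ (i+1) (i₀+1) (by omega) (by omega) (by omega)))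
                  · exact absurd heq (ne_of_lt (av_mono ℓ (i₀+1) (i+1) (by omega) (by omega) (by omega)))
                rw [if_neg hne2, if_neg hne3, if_neg hii]
            calc _ ≤ ∑ i ∈ Finset.range ℓ, (if i = i₀ then 2 else 0) := Finset.sum_le_sum this
              _ = 2 := by rw [Finset.sum_ite_eq' (Finset.range ℓ)]; simp [hi₀]
          omega
        · -- x is possibly 0, 1/2 or 1, contributing at most 1
          have hbind : Multiset.count x ((Multiset.range ℓ).bind
              (fun i => ({av ℓ (i+1), av ℓ (i+1), 1 - av ℓ (i+1), 1 - av ℓ (i+1)} : Multiset ℝ))) = 0 := by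
            rw [bind_count_eq]
            apply Finset.sum_eq_zero
            intro i hi
            simp only [Finset.mem_range] at hi
            rw [if_neg (fun h => hxa ⟨i, hi, h⟩), if_neg (fun h => hxb ⟨i, hi, h⟩)]
          by_cases hx0 : x = 0
          · subst hx0
            have hcnt : Multiset.count (0:ℝ) (M ℓ) = 1 := by
              rw [M, Multiset.count_cons_self,
                Multiset.count_cons_of_ne (by norm_num),
                Multiset.count_cons_of_ne (by norm_num), hbind]
            rw [hcnt]
            exact (Polynomial.rootMultiplicity_pos hne).mpr hd0
          · by_cases hxh : x = 1/2
            · subst hxh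
              have hcnt : Multiset.count (1/2:ℝ) (M ℓ) = 1 := by
                rw [M, Multiset.count_cons_of_ne (by norm_num), Multiset.count_cons_self,
                  Multiset.count_cons_of_ne (by norm_num), hbind]
              rw [hcnt]
              exact (Polynomial.rootMultiplicity_pos hne).mpr hdhalf
            · by_cases hx1 : x = 1
              · subst hx1
                have hcnt : Multiset.count (1:ℝ) (M ℓ) = 1 := by
                  rw [M, Multiset.count_cons_of_ne (by norm_num),
                    Multiset.count_cons_of_ne (by norm_num), Multiset.count_cons_self, hbind]
                rw [hcnt]
                exact (Polynomial.rootMultiplicity_pos hne).mpr hd1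
              · have hcnt : Multiset.count x (M ℓ) = 0 := by
                  rw [M, Multiset.count_cons_of_ne hx0, Multiset.count_cons_of_ne hxh,
                    Multiset.count_cons_of_ne hx1, hbind]
                rw [hcnt]
                omega
    have hcard : (4*ℓ+3 : ℕ) ≤ Multiset.card d.roots := by
      rw [← card_M ℓ]
      exact Multiset.card_le_card hM
    have := Polynomial.card_roots' d
    omega

theorem stmt_18 (ℓ : ℕ) (hℓ : 1 ≤ ℓ) :
    ∃ a : ℕ → ℝ,
      0 < a 1 ∧ (∀ i, 1 ≤ i → i < ℓ → a i < a (i+1)) ∧ a ℓ < 1/2 ∧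
      ∀ p : Polynomial ℝ, definingProps ℓ a p →
        (∀ x ∈ Set.Icc (0:ℝ) (1/2), p.eval x ≤ 1) ∧ memP p := by
  refine ⟨av ℓ, av_pos ℓ 1 le_rfl hℓ, ?_, av_lt_half ℓ ℓ hℓ le_rfl, ?_⟩
  · intro i hi1 hi2
    exact av_mono ℓ i (i+1) hi1 (by omega) (by omega)
  · intro p hp
    obtain ⟨hdeg, hsym, h0, hroots⟩ := hp
    have hpeq : p = p0 ℓ := unique_p ℓ hℓ p hdeg hsym h0 hroots
    subst hpeq
    refine ⟨?_, ?_, ?_, ?_⟩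
    · intro x hx
      obtain ⟨hx0, hx1⟩ := hx
      exact (p0_mem_Icc ℓ x ⟨hx0, by linarith⟩).2
    · exact fun x hx => p0_mem_Icc ℓ x hx
    · exact fun x hx => p0_le_zero ℓ x hx
    · exact fun x hx => p0_ge_one ℓ x hx
end
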